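/- arXiv:2411.02157 — 12 statements merged into one kernel-verified Lean document; each statement's English description precedes it below -/
import Mathlib

section
/- Let A, B ∈ R satisfy [A, B] = 1. Then for all natural numbers m, n ≥ 1 one has the identity [A^m, B^n] = Σ_{k=1}^{min(m,n)} C(k,m,n) · B^{n−k} A^{m−k}, and equivalently [A^m, B^n] = − Σ_{k=1}^{min(m,n)} (−1)^k C(k,m,n) · A^{m−k} B^{n−k}. -/
private lemma central_pow {R : Type*} [Ring R] (x : R) (j : ℕ) :
    x * (-1 : R) ^ j = (-1 : R) ^ j * x :=
  ((Commute.neg_one_right x).pow_right j).eq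

private lemma lem1 {R : Type*} [Ring R] (A B : R) (h : A * B - B * A = 1) :
    ∀ m : ℕ, A ^ m * B = B * A ^ m + (m : R) * A ^ (m - 1) := by
  have hAB : A * B = B * A + 1 := by rw [← h]; abel
  intro m
  induction m with
  | zero => simp
  | succ m ih =>
    cases m with
    | zero => simpa using hAB
    | succ k =>
      simp only [Nat.add_sub_cancel] at ih ⊢
      calc A ^ (k + 2) * B = A ^ (k + 1) * (A * B) := by
            rw [pow_succ, mul_assoc]
        _ = A ^ (k + 1) * B * A + A ^ (k + 1) := by
            rw [hAB, mul_add, mul_one, mul_assoc]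
        _ = (B * A ^ (k + 1) + ((k + 1 : ℕ) : R) * A ^ k) * A + A ^ (k + 1) := by
            rw [ih]
        _ = B * A ^ (k + 2) + ((k + 1 : ℕ) : R) * A ^ (k + 1) + A ^ (k + 1) := by
            rw [add_mul, mul_assoc, ← pow_succ, mul_assoc, ← pow_succ]
        _ = B * A ^ (k + 2) + ((k + 2 : ℕ) : R) * A ^ (k + 1) := by
            push_cast
            noncomm_ring

private lemma coeff (m n k : ℕ) :
    (k + 1).factorial * m.choose (k + 1) * (n + 1).choose (k + 1) =
      (k + 1).factorial * m.choose (k + 1) * n.choose (k + 1) +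
        (m - k) * (k.factorial * m.choose k * n.choose k) := by
  have h1 : (k + 1).factorial * m.choose (k + 1) = k.factorial * (m.choose k * (m - k)) := by
    rw [Nat.factorial_succ, ← Nat.choose_succ_right_eq]; ring
  rw [Nat.choose_succ_succ, mul_add, h1]; ring

private lemma key {R : Type*} [Ring R] (A B : R) (h : A * B - B * A = 1) (m : ℕ) :
    ∀ n : ℕ, A ^ m * B ^ n - B ^ n * A ^ m =
      ∑ k ∈ Finset.range n,
        (((k + 1).factorial * m.choose (k + 1) * n.choose (k + 1) : ℕ) : R) *
          (B ^ (n - (k + 1)) * A ^ (m - (k + 1))) := by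
  intro n
  induction n with
  | zero => simp
  | succ n ih =>
    have step : A ^ m * B ^ (n + 1) - B ^ (n + 1) * A ^ m =
        (A ^ m * B ^ n - B ^ n * A ^ m) * B + B ^ n * (A ^ m * B - B * A ^ m) := by
      rw [pow_succ]; noncomm_ring
    have hm1 : A ^ m * B - B * A ^ m = (m : R) * A ^ (m - 1) := by
      rw [lem1 A B h m]; abel
    rw [step, ih, hm1, Finset.sum_mul]
    -- termwise transformation of the left sum
    have hterm : ∀ k ∈ Finset.range n,
        (((k + 1).factorial * m.choose (k + 1) * n.choose (k + 1) : ℕ) : R) *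
            (B ^ (n - (k + 1)) * A ^ (m - (k + 1))) * B =
          (((k + 1).factorial * m.choose (k + 1) * n.choose (k + 1) : ℕ) : R) *
            (B ^ (n - k) * A ^ (m - (k + 1))) +
          (((m - (k + 1)) * ((k + 1).factorial * m.choose (k + 1) * n.choose (k + 1)) : ℕ) : R) *
            (B ^ (n - (k + 1)) * A ^ (m - (k + 2))) := by
      intro k hk
      have hk' : k < n := Finset.mem_range.mp hk
      have hb : B ^ (n - (k + 1)) * B = B ^ (n - k) := by
        rw [← pow_succ]
        congr 1
        omega
      have ha : A ^ (m - (k + 1)) * B =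
          B * A ^ (m - (k + 1)) + ((m - (k + 1) : ℕ) : R) * A ^ (m - (k + 2)) := by
        have := lem1 A B h (m - (k + 1))
        rwa [show m - (k + 1) - 1 = m - (k + 2) by omega] at this
      set c := (k + 1).factorial * m.choose (k + 1) * n.choose (k + 1) with hc
      set d := m - (k + 1) with hd
      rw [mul_assoc, mul_assoc, ha, mul_add, ← mul_assoc (B ^ (n - (k + 1))), hb, mul_add]
      congr 1
      rw [← mul_assoc (B ^ (n - (k + 1))), ← (Nat.cast_commute d (B ^ (n - (k + 1)))).eq,
        mul_assoc, ← mul_assoc, ← Nat.cast_mul, Nat.mul_comm c d]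
    rw [Finset.sum_congr rfl hterm, Finset.sum_add_distrib]
    -- split the right-hand sum coefficients
    have hsplit : ∀ k ∈ Finset.range (n + 1),
        (((k + 1).factorial * m.choose (k + 1) * (n + 1).choose (k + 1) : ℕ) : R) *
            (B ^ (n + 1 - (k + 1)) * A ^ (m - (k + 1))) =
          (((k + 1).factorial * m.choose (k + 1) * n.choose (k + 1) : ℕ) : R) *
            (B ^ (n - k) * A ^ (m - (k + 1))) +
          (((m - k) * (k.factorial * m.choose k * n.choose k) : ℕ) : R) *
            (B ^ (n - k) * A ^ (m - (k + 1))) := by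
      intro k _
      rw [show n + 1 - (k + 1) = n - k by omega, coeff, Nat.cast_add, add_mul]
    rw [Finset.sum_congr rfl hsplit, Finset.sum_add_distrib, Finset.sum_range_succ,
      Finset.sum_range_succ']
    simp only [Nat.choose_succ_self, Nat.mul_zero, Nat.cast_zero, zero_mul, add_zero,
      Nat.sub_zero, Nat.factorial_zero, Nat.choose_zero_right, Nat.mul_one, Nat.one_mul,
      Nat.mul_one]
    have hlast : (m : R) * (B ^ n * A ^ (m - 1)) = B ^ n * ((m : R) * A ^ (m - 1)) := by
      rw [← mul_assoc, (Nat.cast_commute m (B ^ n)).eq, mul_assoc]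
    rw [hlast]
    have hshift : ∀ k, (((m - (k + 1)) * ((k + 1).factorial * m.choose (k + 1) * n.choose (k + 1)) : ℕ) : R) *
        (B ^ (n - (k + 1)) * A ^ (m - (k + 2))) =
        (((m - (k + 1)) * ((k + 1).factorial * m.choose (k + 1) * n.choose (k + 1)) : ℕ) : R) *
        (B ^ (n - (k + 1)) * A ^ (m - (k + 1 + 1))) := by intro k; rfl
    abel

private lemma part1 {R : Type*} [Ring R] (A B : R) (h : A * B - B * A = 1) (m n : ℕ) :
    A ^ m * B ^ n - B ^ n * A ^ m =
      ∑ k ∈ Finset.Icc 1 (min m n),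
        ((Nat.factorial k * Nat.choose m k * Nat.choose n k : ℕ) : R) *
          (B ^ (n - k) * A ^ (m - k)) := by
  rw [key A B h m n]
  have hsub : Finset.Icc 1 (min m n) ⊆ Finset.Icc 1 n := by
    intro k hk
    simp only [Finset.mem_Icc] at *
    omega
  rw [Finset.sum_subset hsub (by
    intro k hk hk'
    simp only [Finset.mem_Icc] at hk hk'
    have : m < k := by omega
    rw [Nat.choose_eq_zero_of_lt this]
    simp)]
  rw [← Finset.Ico_add_one_right_eq_Icc, Finset.sum_Ico_eq_sum_range]
  simp [add_comm]


/-- Generalized commutator identity: if `[A, B] = 1` in a ring, then for `m, n ≥ 1`,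
`[A^m, B^n] = ∑_{k=1}^{min(m,n)} C(k,m,n) B^{n-k} A^{m-k}
            = - ∑_{k=1}^{min(m,n)} (-1)^k C(k,m,n) A^{m-k} B^{n-k}`,
where `C(k,m,n) = k! · binom(m,k) · binom(n,k)`. -/
theorem stmt_0 {R : Type*} [Ring R] (A B : R) (h : A * B - B * A = 1)
    (m n : ℕ) (hm : 1 ≤ m) (hn : 1 ≤ n) :
    (A ^ m * B ^ n - B ^ n * A ^ m =
      ∑ k ∈ Finset.Icc 1 (min m n),
        ((Nat.factorial k * Nat.choose m k * Nat.choose n k : ℕ) : R) *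
          (B ^ (n - k) * A ^ (m - k))) ∧
    (A ^ m * B ^ n - B ^ n * A ^ m =
      - ∑ k ∈ Finset.Icc 1 (min m n),
        (-1 : R) ^ k * ((Nat.factorial k * Nat.choose m k * Nat.choose n k : ℕ) : R) *
          (A ^ (m - k) * B ^ (n - k))) := by
  refine ⟨part1 A B h m n, ?_⟩
  have h2 : (-B) * A - A * (-B) = 1 := by rw [← h]; noncomm_ring
  have e := part1 (-B) A h2 n m
  have hone : (-1 : R) ^ n * (-1 : R) ^ n = 1 := by
    rw [← pow_add]
    exact Even.neg_one_pow ⟨n, rfl⟩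
  have hD : A ^ m * B ^ n - B ^ n * A ^ m =
      -((-1 : R) ^ n * ((-B) ^ n * A ^ m - A ^ m * (-B) ^ n)) := by
    rw [neg_pow B n]
    rw [show A ^ m * ((-1 : R) ^ n * B ^ n) = (-1 : R) ^ n * (A ^ m * B ^ n) by
      rw [← mul_assoc, central_pow (A ^ m) n, mul_assoc]]
    rw [mul_assoc ((-1 : R) ^ n) (B ^ n) (A ^ m), mul_sub, ← mul_assoc, hone, one_mul,
      ← mul_assoc, hone, one_mul, neg_sub]
  rw [hD, e, Nat.min_comm n m, Finset.mul_sum]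
  rw [Finset.sum_congr rfl (fun k hk => ?_)]
  simp only [Finset.mem_Icc] at hk
  have hkn : k ≤ n := by omega
  have hs : (-1 : R) ^ n * (-1 : R) ^ (n - k) = (-1 : R) ^ k := by
    rw [← pow_add, show n + (n - k) = 2 * (n - k) + k by omega, pow_add, pow_mul]
    simp
  rw [neg_pow B (n - k)]
  rw [show A ^ (m - k) * ((-1 : R) ^ (n - k) * B ^ (n - k)) =
      (-1 : R) ^ (n - k) * (A ^ (m - k) * B ^ (n - k)) by
    rw [← mul_assoc, central_pow (A ^ (m - k)) (n - k), mul_assoc]]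
  rw [show ((Nat.factorial k * Nat.choose n k * Nat.choose m k : ℕ) : R) *
        ((-1 : R) ^ (n - k) * (A ^ (m - k) * B ^ (n - k))) =
      (-1 : R) ^ (n - k) * (((Nat.factorial k * Nat.choose n k * Nat.choose m k : ℕ) : R) *
        (A ^ (m - k) * B ^ (n - k))) by
    rw [← mul_assoc, central_pow _ (n - k), mul_assoc]]
  rw [← mul_assoc, hs, Nat.mul_right_comm, ← mul_assoc]
end

section
/- For all natural numbers m, n ≥ 1 one has [φ^m, π^n] = Σ_{k=1}^{min(m,n)} i^k C(k,m,n) · π^{n−k} φ^{m−k} = − Σ_{k=1}^{min(m,n)} (−i)^k C(k,m,n) · φ^{m−k} π^{n−k}, where C(k,m,n) := k! · binom(m,k) · binom(n,k). -/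
open Finset

lemma commA {A : Type*} [Ring A] [Algebra ℂ A] (φ π : A) (c : ℂ)
    (h : φ * π = π * φ + c • 1) (j : ℕ) :
    φ * π ^ (j+1) = π ^ (j+1) * φ + (((j:ℂ)+1) * c) • π ^ j := by
  induction j with
  | zero => simpa using h
  | succ j ih =>
    have e : φ * π ^ (j+2) = (φ * π ^ (j+1)) * π := by rw [pow_succ, ← mul_assoc]
    rw [e, ih, add_mul, smul_mul_assoc, ← pow_succ, mul_assoc, h, mul_add,
        ← mul_assoc, ← pow_succ, mul_smul_comm, mul_one]
    push_cast
    module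

lemma commA' {A : Type*} [Ring A] [Algebra ℂ A] (φ π : A) (c : ℂ)
    (h : φ * π = π * φ + c • 1) (j : ℕ) :
    φ * π ^ j = π ^ j * φ + (((j:ℕ):ℂ) * c) • π ^ (j-1) := by
  cases j with
  | zero => simp
  | succ j => simpa using commA φ π c h j

lemma normalOrder {A : Type*} [Ring A] [Algebra ℂ A] (φ π : A) (c : ℂ)
    (h : φ * π = π * φ + c • 1) (m n : ℕ) :
    φ ^ m * π ^ n = ∑ k ∈ range (n+1),
      (c ^ k * (Nat.factorial k * Nat.choose m k * Nat.choose n k : ℕ)) •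
        (π ^ (n-k) * φ ^ (m-k)) := by
  induction m with
  | zero =>
    rw [pow_zero, one_mul, Finset.sum_eq_single 0]
    · simp
    · intro k _ hk0
      have : Nat.choose 0 k = 0 := Nat.choose_eq_zero_of_lt (Nat.pos_of_ne_zero hk0)
      simp [this]
    · simp
  | succ m ih =>
    have step : φ ^ (m+1) * π ^ n = φ * (φ ^ m * π ^ n) := by
      rw [pow_succ', mul_assoc]
    rw [step, ih, Finset.mul_sum]
    have hterm : ∀ k ∈ range (n+1),
        φ * ((c ^ k * (Nat.factorial k * Nat.choose m k * Nat.choose n k : ℕ)) •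
            (π ^ (n-k) * φ ^ (m-k)))
        = (c ^ k * (Nat.factorial k * Nat.choose m k * Nat.choose n k : ℕ)) •
            (π ^ (n-k) * φ ^ (m-k+1))
          + (c ^ (k+1) * (Nat.factorial k * Nat.choose m k * Nat.choose n k * (n-k) : ℕ)) •
            (π ^ (n-k-1) * φ ^ (m-k)) := by
      intro k _
      rw [mul_smul_comm, ← mul_assoc, commA' φ π c h (n-k), add_mul, smul_mul_assoc,
          smul_add, smul_smul, mul_assoc (π ^ (n-k)), ← pow_succ']
      congr 2
      push_cast
      ring
    rw [Finset.sum_congr rfl hterm, Finset.sum_add_distrib]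
    -- now match against target
    rw [Finset.sum_range_succ' (fun k =>
      (c ^ k * (Nat.factorial k * Nat.choose (m+1) k * Nat.choose n k : ℕ)) •
        (π ^ (n-k) * φ ^ (m+1-k))) n]
    rw [Finset.sum_range_succ' (fun k =>
      (c ^ k * (Nat.factorial k * Nat.choose m k * Nat.choose n k : ℕ)) •
        (π ^ (n-k) * φ ^ (m-k+1))) n]
    rw [Finset.sum_range_succ (fun k =>
      (c ^ (k+1) * (Nat.factorial k * Nat.choose m k * Nat.choose n k * (n-k) : ℕ)) •
        (π ^ (n-k-1) * φ ^ (m-k))) n]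
    simp only [Nat.sub_self, Nat.mul_zero, Nat.cast_zero, mul_zero, zero_smul, add_zero]
    have h0 : (c ^ 0 * (Nat.factorial 0 * Nat.choose (m+1) 0 * Nat.choose n 0 : ℕ)) •
        (π ^ (n-0) * φ ^ (m+1-0))
        = (c ^ 0 * (Nat.factorial 0 * Nat.choose m 0 * Nat.choose n 0 : ℕ)) •
        (π ^ (n-0) * φ ^ (m-0+1)) := by simp
    rw [h0, add_right_comm]
    congr 1
    rw [← Finset.sum_add_distrib]
    apply Finset.sum_congr rfl
    intro j hj
    have hjn : j < n := Finset.mem_range.mp hj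
    -- g(j+1) = A(j+1) + B(j)
    have pascal : Nat.choose (m+1) (j+1) = Nat.choose m j + Nat.choose m (j+1) :=
      Nat.choose_succ_succ m j
    have hB : Nat.factorial j * Nat.choose m j * Nat.choose n j * (n-j)
        = Nat.factorial (j+1) * Nat.choose m j * Nat.choose n (j+1) := by
      have := Nat.choose_succ_right_eq n j
      rw [Nat.factorial_succ]
      calc Nat.factorial j * Nat.choose m j * Nat.choose n j * (n-j)
          = Nat.factorial j * Nat.choose m j * (Nat.choose n j * (n-j)) := by ring
        _ = Nat.factorial j * Nat.choose m j * (Nat.choose n (j+1) * (j+1)) := by rw [← this]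
        _ = (j+1) * Nat.factorial j * Nat.choose m j * Nat.choose n (j+1) := by ring
    rw [hB, pascal]
    have expand : (c ^ (j+1) * (Nat.factorial (j+1) * (Nat.choose m j + Nat.choose m (j+1)) * Nat.choose n (j+1) : ℕ)) •
        (π ^ (n-(j+1)) * φ ^ (m+1-(j+1)))
        = (c ^ (j+1) * (Nat.factorial (j+1) * Nat.choose m (j+1) * Nat.choose n (j+1) : ℕ)) •
            (π ^ (n-(j+1)) * φ ^ (m+1-(j+1)))
          + (c ^ (j+1) * (Nat.factorial (j+1) * Nat.choose m j * Nat.choose n (j+1) : ℕ)) •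
            (π ^ (n-(j+1)) * φ ^ (m+1-(j+1))) := by
      rw [← add_smul]
      congr 1
      push_cast
      ring
    rw [expand]
    congr 1
    · -- A(j+1), exponent fix
      by_cases hjm : j + 1 ≤ m
      · have : m - (j+1) + 1 = m + 1 - (j+1) := by omega
        rw [this]
      · have h1 : Nat.choose m (j+1) = 0 := Nat.choose_eq_zero_of_lt (by omega)
        simp [h1]
    · -- B(j), exponents
      have e1 : n - j - 1 = n - (j+1) := by omega
      have e2 : m - j = m + 1 - (j+1) := by omega
      rw [e1, e2]

lemma range_split (n : ℕ) : range (n+1) = insert 0 (Finset.Icc 1 n) := by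
  ext x; simp [Nat.lt_succ_iff]; omega



/-- For `φ, π` satisfying the canonical commutation relation `φπ - πφ = i·1` in a
unital ℂ-algebra, and `m, n ≥ 1`:
`[φ^m, π^n] = ∑_{k=1}^{min(m,n)} i^k C(k,m,n) π^{n-k} φ^{m-k}
            = - ∑_{k=1}^{min(m,n)} (-i)^k C(k,m,n) φ^{m-k} π^{n-k}`,
where `C(k,m,n) = k! · binom(m,k) · binom(n,k)`. -/
theorem stmt_1 {A : Type*} [Ring A] [Algebra ℂ A] (φ π : A)
    (h : φ * π - π * φ = Complex.I • (1 : A))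
    (m n : ℕ) (hm : 1 ≤ m) (hn : 1 ≤ n) :
    (φ ^ m * π ^ n - π ^ n * φ ^ m =
      ∑ k ∈ Finset.Icc 1 (min m n),
        (Complex.I ^ k * (Nat.factorial k * Nat.choose m k * Nat.choose n k : ℕ)) •
          (π ^ (n - k) * φ ^ (m - k))) ∧
    (φ ^ m * π ^ n - π ^ n * φ ^ m =
      - ∑ k ∈ Finset.Icc 1 (min m n),
        ((-Complex.I) ^ k * (Nat.factorial k * Nat.choose m k * Nat.choose n k : ℕ)) •
          (φ ^ (m - k) * π ^ (n - k))) := by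
  constructor
  · have h' : φ * π = π * φ + Complex.I • (1 : A) := by rw [← h]; abel
    have e := normalOrder φ π Complex.I h' m n
    rw [range_split, Finset.sum_insert (by simp)] at e
    simp only [pow_zero, Nat.sub_zero, Nat.factorial_zero, Nat.choose_zero_right,
      one_mul, Nat.cast_one, mul_one, one_smul] at e
    rw [e, add_sub_cancel_left]
    symm
    apply Finset.sum_subset
    · exact Finset.Icc_subset_Icc_right (min_le_right m n)
    · intro k hk hk'
      simp only [Finset.mem_Icc] at hk hk'
      have : m < k := by omega
      simp [Nat.choose_eq_zero_of_lt this]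
  · have h' : π * φ = φ * π + (-Complex.I) • (1 : A) := by
      rw [neg_smul, ← h]; abel
    have e := normalOrder π φ (-Complex.I) h' n m
    rw [range_split, Finset.sum_insert (by simp)] at e
    simp only [pow_zero, Nat.sub_zero, Nat.factorial_zero, Nat.choose_zero_right,
      one_mul, Nat.cast_one, mul_one, one_smul] at e
    rw [e]
    rw [show φ ^ m * π ^ n - (φ ^ m * π ^ n + ∑ k ∈ Finset.Icc 1 m,
        ((-Complex.I) ^ k * (Nat.factorial k * Nat.choose n k * Nat.choose m k : ℕ)) •
          (φ ^ (m-k) * π ^ (n-k))) = -∑ k ∈ Finset.Icc 1 m,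
        ((-Complex.I) ^ k * (Nat.factorial k * Nat.choose n k * Nat.choose m k : ℕ)) •
          (φ ^ (m-k) * π ^ (n-k)) by abel]
    congr 1
    rw [show (∑ k ∈ Finset.Icc 1 (min m n),
        ((-Complex.I) ^ k * (Nat.factorial k * Nat.choose m k * Nat.choose n k : ℕ)) •
          (φ ^ (m-k) * π ^ (n-k))) = ∑ k ∈ Finset.Icc 1 (min m n),
        ((-Complex.I) ^ k * (Nat.factorial k * Nat.choose n k * Nat.choose m k : ℕ)) •
          (φ ^ (m-k) * π ^ (n-k)) from Finset.sum_congr rfl (by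
            intro k _; congr 2; push_cast; ring)]
    symm
    apply Finset.sum_subset
    · exact Finset.Icc_subset_Icc_right (min_le_left m n)
    · intro k hk hk'
      simp only [Finset.mem_Icc] at hk hk'
      have : n < k := by omega
      simp [Nat.choose_eq_zero_of_lt this]
end

section
/- For all real numbers x ≥ 1, y > 0 and z > 0, one has (x + y)^z ≤ x^z + x^{z−1} · max((1 + y)^z − 1, y·z). -/
/-!
Write `x + y = x (1 + t)` with `t = y / x ≤ y`. For `z ≤ 1` Bernoulli's inequality gives
`(1 + t)^z ≤ 1 + z t`; for `z ≥ 1` convexity of `s ↦ (1 + s)^z` bounds it by the chord through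
`0` and `y`, i.e. `(1 + t)^z ≤ 1 + (t / y)((1 + y)^z - 1)`. In both cases
`(1 + t)^z ≤ 1 + (t / y) M` with `M` the maximum in the statement, and multiplying by `x^z`
turns `x^z (t / y)` into `x^{z-1}`.
-/

open Real

theorem one_add_rpow_sub_one_div_le_of_le {z t y : ℝ} (hz : 1 ≤ z) (ht : 0 < t) (hty : t ≤ y) :
    ((1 + t) ^ z - 1) / t ≤ ((1 + y) ^ z - 1) / y := by
  have hsecant := (convexOn_rpow hz).secant_mono (a := 1) (x := 1 + t) (y := 1 + y)
    (by simp) (by simp; linarith) (by simp; linarith) (by linarith) (by linarith) (by linarith)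
  simpa only [one_rpow, add_sub_cancel_left] using hsecant

theorem one_add_rpow_le_one_add_div_mul_max {z t y : ℝ} (hz : 0 ≤ z) (ht : 0 < t)
    (hty : t ≤ y) :
    (1 + t) ^ z ≤ 1 + t / y * max ((1 + y) ^ z - 1) (y * z) := by
  have hy : 0 < y := ht.trans_le hty
  suffices (1 + t) ^ z - 1 ≤ t / y * max ((1 + y) ^ z - 1) (y * z) by linarith
  rcases le_total z 1 with hz1 | hz1
  · calc (1 + t) ^ z - 1 ≤ z * t := by
          linarith [rpow_one_add_le_one_add_mul_self (by linarith : -1 ≤ t) hz hz1]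
      _ = t / y * (y * z) := by field_simp
      _ ≤ t / y * max ((1 + y) ^ z - 1) (y * z) := by gcongr; exact le_max_right _ _
  · calc (1 + t) ^ z - 1 = t * (((1 + t) ^ z - 1) / t) := by field_simp
      _ ≤ t * (((1 + y) ^ z - 1) / y) :=
          mul_le_mul_of_nonneg_left (one_add_rpow_sub_one_div_le_of_le hz1 ht hty) ht.le
      _ = t / y * ((1 + y) ^ z - 1) := by ring
      _ ≤ t / y * max ((1 + y) ^ z - 1) (y * z) := by gcongr; exact le_max_left _ _

/-- For real `x ≥ 1`, `y > 0`, `z > 0`: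
`(x + y)^z ≤ x^z + x^{z-1} · max((1 + y)^z - 1, y z)` (real powers). -/
theorem stmt_3 (x y z : ℝ) (hx : 1 ≤ x) (hy : 0 < y) (hz : 0 < z) :
    (x + y) ^ z ≤ x ^ z + x ^ (z - 1) * max ((1 + y) ^ z - 1) (y * z) := by
  have hx0 : 0 < x := one_pos.trans_le hx
  have hyx : y / x ≤ y := div_le_self hy.le hx
  have hsplit : x + y = x * (1 + y / x) := by field_simp
  have hbound := one_add_rpow_le_one_add_div_mul_max hz.le (div_pos hy hx0) hyx
  calc (x + y) ^ z = x ^ z * (1 + y / x) ^ z := by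
        rw [hsplit, mul_rpow hx0.le (by positivity)]
    _ ≤ x ^ z * (1 + y / x / y * max ((1 + y) ^ z - 1) (y * z)) := by gcongr
    _ = x ^ z + x ^ (z - 1) * max ((1 + y) ^ z - 1) (y * z) := by
        rw [rpow_sub_one hx0.ne']; field_simp
end

section
/- Let m̄ ≥ 1 be a natural number, let x₀, x₁, …, x_{m̄+1} be positive reals and a₀, a₁, …, a_{m̄+1} nonnegative reals with a_{m̄+1} = 0, and let 0 < ζ ≤ 1/2. Suppose that for every m with 1 ≤ m ≤ m̄ one has x_m · a_m ≤ ζ · x_{m−1} · a_{m−1} + ζ · x_{m+1} · a_{m+1}. Then for every m with 0 ≤ m ≤ m̄, a_m ≤ ((1 − √(1 − 4ζ²)) / (2ζ))^m · (x₀ a₀) / x_m. -/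
/-!
Write `b m = x m * a m`, so that `b m ≤ ζ b (m-1) + ζ b (m+1)`, and let `r` be the smaller root of
`ζ t² - t + ζ = 0`. Downward induction from `b (m̄+1) = 0` gives `b m ≤ r b (m-1)`: if
`b (m+1) ≤ r b m`, then `(1 - ζ r) b m ≤ ζ b (m-1) = r (1 - ζ r) b (m-1)`. Iterating upwards,
`b m ≤ r ^ m b 0`.
-/

/-- The smaller root of `ζ t² - t + ζ = 0`. -/
noncomputable def decayRate (ζ : ℝ) : ℝ := (1 - √(1 - 4 * ζ ^ 2)) / (2 * ζ)

lemma decayRate_nonneg {ζ : ℝ} (hζ : 0 ≤ ζ) : 0 ≤ decayRate ζ := by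
  have hs : √(1 - 4 * ζ ^ 2) ≤ 1 := Real.sqrt_le_one.mpr (by nlinarith)
  unfold decayRate
  apply div_nonneg <;> linarith

lemma mul_decayRate {ζ : ℝ} (hζ : ζ ≠ 0) : ζ * decayRate ζ = (1 - √(1 - 4 * ζ ^ 2)) / 2 := by
  unfold decayRate
  field_simp

lemma mul_decayRate_lt_one (ζ : ℝ) : ζ * decayRate ζ < 1 := by
  rcases eq_or_ne ζ 0 with rfl | hζ
  · simp
  · rw [mul_decayRate hζ]
    linarith [Real.sqrt_nonneg (1 - 4 * ζ ^ 2)]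

lemma decayRate_isRoot {ζ : ℝ} (hζ : ζ ≠ 0) (hζ' : 4 * ζ ^ 2 ≤ 1) :
    ζ * decayRate ζ ^ 2 + ζ = decayRate ζ := by
  have hs : √(1 - 4 * ζ ^ 2) ^ 2 = 1 - 4 * ζ ^ 2 := Real.sq_sqrt (by linarith)
  have hu := mul_decayRate hζ
  apply mul_left_cancel₀ hζ
  linear_combination (ζ * decayRate ζ + (1 - √(1 - 4 * ζ ^ 2)) / 2 - 1) * hu + hs / 4

theorem le_mul_of_le_mul_neighbours_add {b : ℕ → ℝ} {ζ r : ℝ} {n : ℕ} (hζ : 0 ≤ ζ)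
    (hroot : ζ * r ^ 2 + ζ = r) (hζr : ζ * r < 1)
    (hrec : ∀ m < n, b (m + 1) ≤ ζ * b m + ζ * b (m + 2)) (hlast : b (n + 1) ≤ r * b n) :
    ∀ m ≤ n, b (m + 1) ≤ r * b m := by
  intro m hm
  induction hm using Nat.decreasingInduction with
  | self => exact hlast
  | of_succ k hk ih =>
    have h : b (k + 1) ≤ ζ * b k + ζ * (r * b (k + 1)) := (hrec k hk).trans (by gcongr)
    have key : (1 - ζ * r) * b (k + 1) ≤ (1 - ζ * r) * (r * b k) := by
      linear_combination h + b k * hroot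
    exact le_of_mul_le_mul_left key (by linarith)

theorem stmt_4_general (mb : ℕ) (x a : ℕ → ℝ) (ζ : ℝ)
    (hx : ∀ m ≤ mb + 1, 0 < x m) (ha : ∀ m ≤ mb + 1, 0 ≤ a m)
    (hlast : a (mb + 1) = 0) (hζ0 : 0 < ζ) (hζ : ζ ≤ 1 / 2)
    (hrec : ∀ m, 1 ≤ m → m ≤ mb →
      x m * a m ≤ ζ * (x (m - 1) * a (m - 1)) + ζ * (x (m + 1) * a (m + 1))) :
    ∀ m ≤ mb,
      a m ≤ ((1 - Real.sqrt (1 - 4 * ζ ^ 2)) / (2 * ζ)) ^ m * (x 0 * a 0) / x m := by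
  have hr0 : 0 ≤ decayRate ζ := decayRate_nonneg hζ0.le
  have hstep : ∀ m ≤ mb, x (m + 1) * a (m + 1) ≤ decayRate ζ * (x m * a m) :=
    le_mul_of_le_mul_neighbours_add (b := fun m => x m * a m) hζ0.le
      (decayRate_isRoot hζ0.ne' (by nlinarith)) (mul_decayRate_lt_one ζ)
      (fun m hm => by simpa using hrec (m + 1) (by omega) (by omega))
      (by rw [hlast, mul_zero]
          exact mul_nonneg hr0 (mul_nonneg (hx mb (by omega)).le (ha mb (by omega))))
  intro m hm
  rw [le_div_iff₀ (hx m (by omega)), mul_comm]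
  exact le_geom (u := fun m => x m * a m) hr0 m fun k hk => hstep k (by omega)

/-- Recursive sequence bound: if `x₀,…,x_{m̄+1} > 0`, `a₀,…,a_{m̄+1} ≥ 0` with
`a_{m̄+1} = 0`, `0 < ζ ≤ 1/2`, and `x_m a_m ≤ ζ x_{m-1} a_{m-1} + ζ x_{m+1} a_{m+1}`
for `1 ≤ m ≤ m̄`, then `a_m ≤ ((1 - √(1 - 4ζ²))/(2ζ))^m (x₀ a₀)/x_m` for `0 ≤ m ≤ m̄`. -/
theorem stmt_4 (mb : ℕ) (hmb : 1 ≤ mb) (x a : ℕ → ℝ) (ζ : ℝ)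
    (hx : ∀ m ≤ mb + 1, 0 < x m) (ha : ∀ m ≤ mb + 1, 0 ≤ a m)
    (hlast : a (mb + 1) = 0) (hζ0 : 0 < ζ) (hζ : ζ ≤ 1 / 2)
    (hrec : ∀ m, 1 ≤ m → m ≤ mb →
      x m * a m ≤ ζ * (x (m - 1) * a (m - 1)) + ζ * (x (m + 1) * a (m + 1))) :
    ∀ m ≤ mb,
      a m ≤ ((1 - Real.sqrt (1 - 4 * ζ ^ 2)) / (2 * ζ)) ^ m * (x 0 * a 0) / x m :=
  stmt_4_general mb x a ζ hx ha hlast hζ0 hζ hrec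
end

section
/- For every natural number s ≥ 1 there exists a family of complex coefficients λ(m₁, m₂), indexed by pairs of natural numbers and vanishing whenever m₁ + m₂ > 2s, such that (φ² + π²)^s = Σ_{m₁ + m₂ ≤ 2s} λ(m₁, m₂) · φ^{m₁} π^{m₂} and |λ(m₁, m₂)| ≤ 4^s · s^{2s − m₁ − m₂} for all m₁, m₂ with m₁ + m₂ ≤ 2s. -/
/-!
In normal-ordered form `∑ c(a,b) φ^a π^b`, right multiplication by `φ² + π²` acts on the
coefficients through `stepCoeff`: if `φπ - πφ = ħ`, moving `φ²` to the left of `π^b` gives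
`φ² π^b` plus the contractions `-2bħ φ π^(b-1)` and `b(b-1)ħ² π^(b-2)`. For `‖ħ‖ ≤ 1` and degree
at most `2s` these multiply a coefficient by at most `4s` and `4s²`, so with `k = 2s + 2 - a - b`
the new coefficients are bounded by `4^s (2 s^k + 4 s^(k-1) + 4 s^(k-2)) ≤ 4^(s+1) (s+1)^k`.
-/

open Finset

def triangle (n : ℕ) : Finset (ℕ × ℕ) :=
  (range (n + 1) ×ˢ range (n + 1)).filter (fun p => p.1 + p.2 ≤ n)

@[simp]
theorem mem_triangle {n : ℕ} {p : ℕ × ℕ} : p ∈ triangle n ↔ p.1 + p.2 ≤ n := by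
  simp only [triangle, mem_filter, mem_product, mem_range]
  omega

theorem sum_triangle_smul_shift {R M : Type*} [Semiring R] [AddCommMonoid M] [Module R M]
    {n m d₁ d₂ e : ℕ} (hnm : n + d₁ + d₂ ≤ m + e) (c : ℕ → ℕ → R)
    (hc : ∀ a b, c a b ≠ 0 → e ≤ b ∧ a + b ≤ n) (v : ℕ → ℕ → M) :
    ∑ p ∈ triangle n, c p.1 p.2 • v (p.1 + d₁) (p.2 + d₂ - e) =
      ∑ q ∈ triangle m,
        (if d₁ ≤ q.1 ∧ d₂ ≤ q.2 then c (q.1 - d₁) (q.2 + e - d₂) else 0) • v q.1 q.2 := by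
  refine sum_bij_ne_zero (fun p _ _ => (p.1 + d₁, p.2 + d₂ - e)) ?_ ?_ ?_ ?_
  · intro p _ hp
    have := hc _ _ (left_ne_zero_of_smul hp)
    simp only [mem_triangle]
    omega
  · intro p _ hp p' _ hp' hpp'
    have := hc _ _ (left_ne_zero_of_smul hp)
    have := hc _ _ (left_ne_zero_of_smul hp')
    simp only [Prod.mk.injEq] at hpp'
    ext <;> omega
  · intro q _ hq
    have hcq := left_ne_zero_of_smul hq
    split_ifs at hcq with hdq
    · have := hc _ _ hcq
      refine ⟨(q.1 - d₁, q.2 + e - d₂), by simpa using this.2, ?_, ?_⟩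
      · have hq₂ : q.2 + e - d₂ + d₂ - e = q.2 := by omega
        simpa [Nat.sub_add_cancel hdq.1, hq₂, hdq] using hq
      · ext <;> simp <;> omega
    · exact absurd rfl hcq
  · intro p _ hp
    have := hc _ _ (left_ne_zero_of_smul hp)
    rw [if_pos (by omega)]
    congr <;> omega

section Commutation

variable {R A : Type*} [CommRing R] [Ring A] [Algebra R A] {φ π : A} {ħ : R}

theorem pow_mul_eq_sub_of_commutator (h : φ * π - π * φ = ħ • 1) (m : ℕ) :
    π ^ m * φ = φ * π ^ m - (m * ħ) • π ^ (m - 1) := by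
  induction m with
  | zero => simp
  | succ m ih =>
    have hπφ : π * φ = φ * π - ħ • 1 := by rw [← h]; abel
    rw [pow_succ, mul_assoc, hπφ, mul_sub, ← mul_assoc, ih]
    rcases m with _ | m
    · simp
    · simp only [Nat.add_sub_cancel, sub_mul, smul_mul_assoc, mul_assoc, ← pow_succ,
        mul_smul_comm, mul_one]
      push_cast
      module

theorem pow_mul_sq_eq_of_commutator (h : φ * π - π * φ = ħ • 1) (m : ℕ) :
    π ^ m * φ ^ 2 = φ ^ 2 * π ^ m - (2 * m * ħ) • (φ * π ^ (m - 1))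
      + (m * (m - 1 : ℕ) * ħ ^ 2 : R) • π ^ (m - 2) := by
  rw [sq, ← mul_assoc, pow_mul_eq_sub_of_commutator h, sub_mul, mul_assoc,
    pow_mul_eq_sub_of_commutator h, smul_mul_assoc, pow_mul_eq_sub_of_commutator h]
  rcases m with _ | m
  · simp
  · simp only [Nat.add_sub_cancel, mul_sub, mul_smul_comm, smul_sub, smul_smul,
      ← mul_assoc]
    push_cast
    module

theorem monomial_mul_sq_add_sq (h : φ * π - π * φ = ħ • 1) (a b : ℕ) :
    φ ^ a * π ^ b * (φ ^ 2 + π ^ 2) = φ ^ (a + 2) * π ^ b + φ ^ a * π ^ (b + 2)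
      - (2 * b * ħ) • (φ ^ (a + 1) * π ^ (b - 1))
      + (b * (b - 1 : ℕ) * ħ ^ 2 : R) • (φ ^ a * π ^ (b - 2)) := by
  rw [mul_add, mul_assoc, pow_mul_sq_eq_of_commutator h]
  simp only [mul_add, mul_sub, mul_smul_comm, ← mul_assoc, ← pow_add, ← pow_succ]
  rw [mul_assoc _ (π ^ b), ← pow_add]
  abel

end Commutation

section NormalForm

variable {R A : Type*} [CommRing R] [Ring A] [Algebra R A]

def normalForm (φ π : A) (n : ℕ) (c : ℕ → ℕ → R) : A :=
  ∑ p ∈ triangle n, c p.1 p.2 • (φ ^ p.1 * π ^ p.2)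

/-- The coefficient of `φ ^ a * π ^ b` in `normalForm φ π n c * (φ ^ 2 + π ^ 2)`: the two shifted
terms and the single and double contractions of `monomial_mul_sq_add_sq`. -/
def stepCoeff (ħ : R) (c : ℕ → ℕ → R) (a b : ℕ) : R :=
  (if 2 ≤ a then c (a - 2) b else 0) + (if 2 ≤ b then c a (b - 2) else 0)
    - (if 1 ≤ a then c (a - 1) (b + 1) * (2 * (b + 1 : ℕ) * ħ) else 0)
    + c a (b + 2) * ((b + 2 : ℕ) * (b + 1 : ℕ) * ħ ^ 2)

theorem normalForm_mul_sq_add_sq {φ π : A} {ħ : R} (h : φ * π - π * φ = ħ • 1) {n : ℕ}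
    (c : ℕ → ℕ → R) (hc : ∀ a b, n < a + b → c a b = 0) :
    normalForm φ π n c * (φ ^ 2 + π ^ 2) = normalForm φ π (n + 2) (stepCoeff ħ c) := by
  have hsupp : ∀ a b, c a b ≠ 0 → a + b ≤ n := fun a b hab => by
    by_contra hlt; exact hab (hc a b (by omega))
  have h₁ := sum_triangle_smul_shift (n := n) (m := n + 2) (d₁ := 2) (d₂ := 0) (e := 0)
    (by omega) c (fun a b hab => ⟨b.zero_le, hsupp a b hab⟩) (fun a b => φ ^ a * π ^ b)
  have h₂ := sum_triangle_smul_shift (n := n) (m := n + 2) (d₁ := 0) (d₂ := 2) (e := 0)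
    (by omega) c (fun a b hab => ⟨b.zero_le, hsupp a b hab⟩) (fun a b => φ ^ a * π ^ b)
  have h₃ := sum_triangle_smul_shift (n := n) (m := n + 2) (d₁ := 1) (d₂ := 0) (e := 1)
    (by omega) (fun a b => c a b * (2 * b * ħ))
    (fun a b hab => ⟨Nat.one_le_iff_ne_zero.2 fun hb => by simp [hb] at hab,
      hsupp a b (left_ne_zero_of_mul hab)⟩) (fun a b => φ ^ a * π ^ b)
  have h₄ := sum_triangle_smul_shift (n := n) (m := n + 2) (d₁ := 0) (d₂ := 0) (e := 2)
    (by omega) (fun a b => c a b * (b * (b - 1 : ℕ) * ħ ^ 2))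
    (fun a b hab => ⟨by rcases b with _ | _ | b <;> simp at hab ⊢,
      hsupp a b (left_ne_zero_of_mul hab)⟩) (fun a b => φ ^ a * π ^ b)
  simp only [Nat.add_zero, Nat.sub_zero, zero_le, and_true, true_and, if_true,
    Nat.reduceSubDiff] at h₁ h₂ h₃ h₄
  simp only [normalForm, sum_mul, smul_mul_assoc, monomial_mul_sq_add_sq h, smul_add, smul_sub,
    smul_smul, sum_add_distrib, sum_sub_distrib, stepCoeff, add_smul, sub_smul, h₁, h₂, h₃, h₄]

theorem stepCoeff_eq_zero (ħ : R) {n : ℕ} {c : ℕ → ℕ → R}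
    (hc : ∀ a b, n < a + b → c a b = 0) {a b : ℕ} (hab : n + 2 < a + b) :
    stepCoeff ħ c a b = 0 := by
  simp [stepCoeff, hc (a - 2) b (by omega), hc a (b - 2) (by omega),
    hc (a - 1) (b + 1) (by omega), hc a (b + 2) (by omega)]

end NormalForm

theorem two_mul_pow_add_le_four_mul_add_one_pow {x : ℝ} (hx : 0 ≤ x) (j : ℕ) :
    2 * x ^ (j + 2) + 4 * x ^ (j + 1) + 4 * x ^ j ≤ 4 * (x + 1) ^ (j + 2) := by
  have hxj : x ^ j ≤ (x + 1) ^ j := pow_le_pow_left₀ hx (by linarith) j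
  have : 0 ≤ x ^ j := by positivity
  calc 2 * x ^ (j + 2) + 4 * x ^ (j + 1) + 4 * x ^ j
      ≤ 4 * x ^ j * (x + 1) ^ 2 := by ring_nf; nlinarith
    _ ≤ 4 * (x + 1) ^ j * (x + 1) ^ 2 := by gcongr
    _ = 4 * (x + 1) ^ (j + 2) := by ring

section CoeffBounds

variable {ħ : ℂ} {s : ℕ} {c : ℕ → ℕ → ℂ}

theorem norm_single_contraction_le (hħ : ‖ħ‖ ≤ 1)
    (hc : ∀ a b i, a + b + i = 2 * s → ‖c a b‖ ≤ 4 ^ s * (s : ℝ) ^ i)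
    {a b j : ℕ} (habj : a + b + j = 2 * s) :
    ‖if 1 ≤ a then c (a - 1) (b + 1) * (2 * (b + 1 : ℕ) * ħ) else 0‖
      ≤ 4 * 4 ^ s * (s : ℝ) ^ (j + 1) := by
  split_ifs with ha
  · have hb : ((b + 1 : ℕ) : ℝ) ≤ 2 * s := by exact_mod_cast (by omega : b + 1 ≤ 2 * s)
    calc _ = ‖c (a - 1) (b + 1)‖ * (2 * (b + 1 : ℕ) * ‖ħ‖) := by
          rw [norm_mul, norm_mul, norm_mul, Complex.norm_natCast, RCLike.norm_ofNat]
      _ ≤ 4 ^ s * (s : ℝ) ^ j * (2 * (2 * s) * 1) := by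
          gcongr
          exact hc _ _ _ (by omega)
      _ = 4 * 4 ^ s * (s : ℝ) ^ (j + 1) := by ring
  · rw [norm_zero]; positivity

theorem norm_double_contraction_le (hħ : ‖ħ‖ ≤ 1) (hc₀ : ∀ a b, 2 * s < a + b → c a b = 0)
    (hc : ∀ a b i, a + b + i = 2 * s → ‖c a b‖ ≤ 4 ^ s * (s : ℝ) ^ i)
    {a b j : ℕ} (habj : a + b + j = 2 * s) :
    ‖c a (b + 2) * ((b + 2 : ℕ) * (b + 1 : ℕ) * ħ ^ 2)‖ ≤ 4 * 4 ^ s * (s : ℝ) ^ j := by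
  rcases lt_or_ge j 2 with hj | hj
  · rw [hc₀ a (b + 2) (by omega), zero_mul, norm_zero]; positivity
  obtain ⟨i, rfl⟩ : ∃ i, j = i + 2 := ⟨j - 2, by omega⟩
  have hb₂ : ((b + 2 : ℕ) : ℝ) ≤ 2 * s := by exact_mod_cast (by omega : b + 2 ≤ 2 * s)
  have hb₁ : ((b + 1 : ℕ) : ℝ) ≤ 2 * s := by exact_mod_cast (by omega : b + 1 ≤ 2 * s)
  have hħ₂ : ‖ħ‖ ^ 2 ≤ 1 := pow_le_one₀ (norm_nonneg ħ) hħ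
  calc _ = ‖c a (b + 2)‖ * ((b + 2 : ℕ) * (b + 1 : ℕ) * ‖ħ‖ ^ 2) := by
        rw [norm_mul, norm_mul, norm_mul, Complex.norm_natCast, Complex.norm_natCast, norm_pow]
    _ ≤ 4 ^ s * (s : ℝ) ^ i * (2 * s * (2 * s) * 1) := by
        gcongr
        exact hc _ _ _ (by omega)
    _ = 4 * 4 ^ s * (s : ℝ) ^ (i + 2) := by ring

theorem norm_stepCoeff_le (hħ : ‖ħ‖ ≤ 1) (hc₀ : ∀ a b, 2 * s < a + b → c a b = 0)
    (hc : ∀ a b, a + b ≤ 2 * s → ‖c a b‖ ≤ 4 ^ s * (s : ℝ) ^ (2 * s - a - b))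
    {a b : ℕ} (hab : a + b ≤ 2 * (s + 1)) :
    ‖stepCoeff ħ c a b‖ ≤ 4 ^ (s + 1) * ((s + 1 : ℕ) : ℝ) ^ (2 * (s + 1) - a - b) := by
  have hc' : ∀ a' b' i, a' + b' + i = 2 * s → ‖c a' b'‖ ≤ 4 ^ s * (s : ℝ) ^ i := by
    intro a' b' i hi
    convert hc a' b' (by omega) using 3
    omega
  set k := 2 * (s + 1) - a - b
  have hshift₁ : ‖if 2 ≤ a then c (a - 2) b else 0‖ ≤ 4 ^ s * (s : ℝ) ^ k := by
    split_ifs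
    · exact hc' _ _ _ (by omega)
    · rw [norm_zero]; positivity
  have hshift₂ : ‖if 2 ≤ b then c a (b - 2) else 0‖ ≤ 4 ^ s * (s : ℝ) ^ k := by
    split_ifs
    · exact hc' _ _ _ (by omega)
    · rw [norm_zero]; positivity
  have htri : ‖stepCoeff ħ c a b‖ ≤ ‖if 2 ≤ a then c (a - 2) b else 0‖
      + ‖if 2 ≤ b then c a (b - 2) else 0‖
      + ‖if 1 ≤ a then c (a - 1) (b + 1) * (2 * (b + 1 : ℕ) * ħ) else 0‖
      + ‖c a (b + 2) * ((b + 2 : ℕ) * (b + 1 : ℕ) * ħ ^ 2)‖ := by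
    rw [stepCoeff, sub_eq_add_neg, ← norm_neg (if 1 ≤ a then _ else _)]
    exact norm_add₄_le
  have hs : (0 : ℝ) ≤ s := s.cast_nonneg
  push_cast
  rcases lt_or_ge k 2 with hk | hk
  · have hsingle : (if 1 ≤ a then c (a - 1) (b + 1) * (2 * (b + 1 : ℕ) * ħ) else 0) = 0 := by
      split_ifs <;> simp [hc₀ (a - 1) (b + 1) (by omega)]
    rw [hsingle, hc₀ a (b + 2) (by omega), zero_mul, norm_zero, add_zero, add_zero] at htri
    have : 0 ≤ 4 ^ s * ((s : ℝ) + 1) ^ k := by positivity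
    calc ‖stepCoeff ħ c a b‖ ≤ 2 * (4 ^ s * (s : ℝ) ^ k) := by linarith
      _ ≤ 2 * (4 ^ s * (s + 1) ^ k) := by gcongr; linarith
      _ ≤ 4 ^ (s + 1) * (s + 1) ^ k := by rw [pow_succ]; linarith
  · obtain ⟨j, hj⟩ : ∃ j, k = j + 2 := ⟨k - 2, by omega⟩
    have hsingle := norm_single_contraction_le hħ hc' (a := a) (b := b) (j := j) (by omega)
    have hdouble := norm_double_contraction_le hħ hc₀ hc' (a := a) (b := b) (j := j) (by omega)
    have := two_mul_pow_add_le_four_mul_add_one_pow hs j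
    rw [hj] at hshift₁ hshift₂ ⊢
    calc ‖stepCoeff ħ c a b‖
        ≤ 4 ^ s * (2 * (s : ℝ) ^ (j + 2) + 4 * (s : ℝ) ^ (j + 1) + 4 * (s : ℝ) ^ j) := by
          linarith
      _ ≤ 4 ^ s * (4 * (s + 1) ^ (j + 2)) := by gcongr
      _ = 4 ^ (s + 1) * (s + 1) ^ (j + 2) := by ring

end CoeffBounds

theorem exists_sq_add_sq_pow_eq_normalForm {A : Type*} [Ring A] [Algebra ℂ A] {φ π : A} {ħ : ℂ}
    (hħ : ‖ħ‖ ≤ 1) (h : φ * π - π * φ = ħ • 1) (s : ℕ) :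
    ∃ c : ℕ → ℕ → ℂ, (∀ a b, 2 * s < a + b → c a b = 0) ∧
      (φ ^ 2 + π ^ 2) ^ s = normalForm φ π (2 * s) c ∧
      ∀ a b, a + b ≤ 2 * s → ‖c a b‖ ≤ 4 ^ s * (s : ℝ) ^ (2 * s - a - b) := by
  induction s with
  | zero =>
    refine ⟨fun a b => if a = 0 ∧ b = 0 then 1 else 0, fun a b hab => ?_, ?_, fun a b hab => ?_⟩
    · simp only [ite_eq_right_iff]; omega
    · simp [normalForm, show triangle 0 = {(0, 0)} by decide]
    · obtain ⟨rfl, rfl⟩ : a = 0 ∧ b = 0 := by omega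
      simp
  | succ s ih =>
    obtain ⟨c, hc₀, hcφ, hc⟩ := ih
    refine ⟨stepCoeff ħ c, fun a b hab => stepCoeff_eq_zero ħ hc₀ (by omega), ?_,
      fun a b hab => norm_stepCoeff_le hħ hc₀ hc hab⟩
    rw [pow_succ, hcφ, normalForm_mul_sq_add_sq h c hc₀, mul_add_one]

theorem stmt_6_general {A : Type*} [Ring A] [Algebra ℂ A] (φ π : A)
    (h : φ * π - π * φ = Complex.I • (1 : A)) (s : ℕ) :
    ∃ lam : ℕ → ℕ → ℂ,
      (∀ m₁ m₂, 2 * s < m₁ + m₂ → lam m₁ m₂ = 0) ∧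
      ((φ ^ 2 + π ^ 2) ^ s =
        ∑ p ∈ (Finset.range (2 * s + 1) ×ˢ Finset.range (2 * s + 1)).filter
            (fun p => p.1 + p.2 ≤ 2 * s),
          lam p.1 p.2 • (φ ^ p.1 * π ^ p.2)) ∧
      (∀ m₁ m₂, m₁ + m₂ ≤ 2 * s →
        ‖lam m₁ m₂‖ ≤ 4 ^ s * (s : ℝ) ^ (2 * s - m₁ - m₂)) :=
  exists_sq_add_sq_pow_eq_normalForm (by simp) h s

/-- For `φ, π` with `φπ - πφ = i·1` in a unital ℂ-algebra and `s ≥ 1`, there exist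
complex coefficients `λ(m₁,m₂)`, vanishing for `m₁ + m₂ > 2s`, such that
`(φ² + π²)^s = ∑_{m₁+m₂ ≤ 2s} λ(m₁,m₂) φ^{m₁} π^{m₂}` and
`|λ(m₁,m₂)| ≤ 4^s s^{2s - m₁ - m₂}` whenever `m₁ + m₂ ≤ 2s`. -/
theorem stmt_6 {A : Type*} [Ring A] [Algebra ℂ A] (φ π : A)
    (h : φ * π - π * φ = Complex.I • (1 : A)) (s : ℕ) (hs : 1 ≤ s) :
    ∃ lam : ℕ → ℕ → ℂ,
      (∀ m₁ m₂, 2 * s < m₁ + m₂ → lam m₁ m₂ = 0) ∧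
      ((φ ^ 2 + π ^ 2) ^ s =
        ∑ p ∈ (Finset.range (2 * s + 1) ×ˢ Finset.range (2 * s + 1)).filter
            (fun p => p.1 + p.2 ≤ 2 * s),
          lam p.1 p.2 • (φ ^ p.1 * π ^ p.2)) ∧
      (∀ m₁ m₂, m₁ + m₂ ≤ 2 * s →
        ‖lam m₁ m₂‖ ≤ 4 ^ s * (s : ℝ) ^ (2 * s - m₁ - m₂)) :=
  stmt_6_general φ π h s
end

section
/- Let c₁ ≥ 1 be a real number such that ⟨φ^{2t}⟩ ≤ (c₁ t)^{2t} for every natural number t ≥ 1, and let n ≥ 1 be a natural number (playing the role of 2κ, so κ = n/2). Then for all natural numbers m ≥ 1, s with 1 ≤ s ≤ 2m, and s', s'' with 2(s' + s'') ≤ n·s, one has |⟨π^{2m−s} φ^{s'} Φ₀^{s''}⟩| ≤ 3 · ⟨Φ₀^{2nm}⟩^{s''/(2nm)} · max( ⟨π^{2m}⟩^{1 − s/(2m)} · (2 c₁ n m)^{s'}, (2 c₁ n m)^{2m + s' − s} ), where the powers of the nonnegative reals ⟨Φ₀^{2nm}⟩ and ⟨π^{2m}⟩ are real powers. -/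
/-!
Put `C = 2 c₁ n m`, `D = max (⟨π^{2m}⟩^{1/2m}, C)` and `γ = ⟨Φ₀^{2nm}⟩^{1/2nm}`. Cauchy–Schwarz
makes `k ↦ ⟨X^{2k}⟩` log-convex for self-adjoint `X`, so Lyapunov's inequality gives
`⟨π^{2p}⟩ ≤ D^{2p}`, `⟨Φ₀^{2u}⟩ ≤ γ^{2u}`, and the hypothesis gives `⟨φ^{2t}⟩ ≤ C^{2t}` in the
relevant range. Then `|⟨π^p φ^q Φ₀^u⟩| ≤ 3 γ^u D^p C^q` whenever `p < 2m` and
`2(q + u) ≤ n(2m - p)`, by strong induction on `p` and Cauchy–Schwarz: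
* if `p ≥ m`, split off `π^m`; the other factor is `⟨φ^q π^{2(p-m)} φ^q Φ₀^{2u}⟩`;
* if `p < m` and `2u ≤ nm`, split off `π^p`, then separate `Φ₀^{2u}` from `φ^{2q}`;
* if `p < m` and `2u > nm`, split off `Φ₀^u`; the other factor is `⟨φ^q π^{2p} φ^q⟩`, and the
  large `u` leaves enough room in the budget for the case `u = 0` of the claim.
A sandwich `⟨φ^q π^V φ^q Z⟩` is normal ordered with the CCR,
`φ^q π^V = ∑ⱼ iʲ j! (V choose j) (q choose j) π^{V-j} φ^{q-j}`, into terms with fewer `π`s; as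
`2Vq ≤ C²`, their bounds decay like `2^{-j}`, which costs a factor `2`, and `√6 ≤ 3`.
Finally `D^{2m-s} C^{s'} = max (⟨π^{2m}⟩^{1-s/2m} C^{s'}, C^{2m+s'-s})`.
-/

open scoped ComplexOrder ComplexConjugate

open Complex Finset

theorem IsSelfAdjoint.star_pow_mul_pow {R : Type*} [Monoid R] [StarMul R] {x : R}
    (hx : IsSelfAdjoint x) (k : ℕ) : star (x ^ k) * x ^ k = x ^ (2 * k) := by
  rw [(hx.pow k).star_eq, ← pow_add, two_mul]

theorem pow_succ_le_pow_of_sq_le_mul {a : ℕ → ℝ} (h0 : a 0 = 1) (hnn : ∀ k, 0 ≤ a k)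
    (hlc : ∀ k, a (k + 1) ^ 2 ≤ a k * a (k + 2)) (k : ℕ) : a k ^ (k + 1) ≤ a (k + 1) ^ k := by
  induction k with
  | zero => simp [h0]
  | succ k ih =>
    rcases (hnn (k + 1)).eq_or_lt with h | hpos
    · rw [← h, zero_pow (by omega : k + 2 ≠ 0)]
      exact pow_nonneg (hnn _) _
    · refine le_of_mul_le_mul_left ?_ (pow_pos hpos k)
      calc a (k + 1) ^ k * a (k + 1) ^ (k + 2) = (a (k + 1) ^ 2) ^ (k + 1) := by ring
        _ ≤ (a k * a (k + 2)) ^ (k + 1) := pow_le_pow_left₀ (sq_nonneg _) (hlc k) _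
        _ = a k ^ (k + 1) * a (k + 2) ^ (k + 1) := mul_pow _ _ _
        _ ≤ a (k + 1) ^ k * a (k + 2) ^ (k + 1) :=
          mul_le_mul_of_nonneg_right ih (pow_nonneg (hnn _) _)

/-- Lyapunov's inequality. -/
theorem pow_le_pow_of_sq_le_mul {a : ℕ → ℝ} (h0 : a 0 = 1) (hnn : ∀ k, 0 ≤ a k)
    (hlc : ∀ k, a (k + 1) ^ 2 ≤ a k * a (k + 2)) {w R : ℕ} (hwR : w ≤ R) :
    a w ^ R ≤ a R ^ w := by
  induction R, hwR using Nat.le_induction with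
  | base => rfl
  | succ R hwR ih =>
    rcases Nat.eq_zero_or_pos w with rfl | hw
    · simp [h0]
    refine (pow_le_pow_iff_left₀ (pow_nonneg (hnn _) _) (pow_nonneg (hnn _) _)
      (by omega : R ≠ 0)).1 ?_
    calc (a w ^ (R + 1)) ^ R = (a w ^ R) ^ (R + 1) := by ring
      _ ≤ (a R ^ w) ^ (R + 1) := pow_le_pow_left₀ (pow_nonneg (hnn _) _) ih _
      _ = (a R ^ (R + 1)) ^ w := by ring
      _ ≤ (a (R + 1) ^ R) ^ w := pow_le_pow_left₀ (pow_nonneg (hnn _) _)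
          (pow_succ_le_pow_of_sq_le_mul h0 hnn hlc R) _
      _ = (a (R + 1) ^ w) ^ R := by ring

section State

variable {A : Type*} [Ring A] [StarRing A] [Algebra ℂ A] {ω : A →ₗ[ℂ] ℂ}

theorem re_map_star_mul_self_nonneg (hω : ∀ a : A, 0 ≤ ω (star a * a)) (a : A) :
    0 ≤ (ω (star a * a)).re :=
  (nonneg_iff.1 (hω a)).1

theorem im_map_star_mul_self (hω : ∀ a : A, 0 ≤ ω (star a * a)) (a : A) :
    (ω (star a * a)).im = 0 :=
  (nonneg_iff.1 (hω a)).2.symm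

theorem re_map_pow_two_mul_nonneg (hω : ∀ a : A, 0 ≤ ω (star a * a)) {X : A}
    (hX : IsSelfAdjoint X) (k : ℕ) :
    0 ≤ (ω (X ^ (2 * k))).re :=
  hX.star_pow_mul_pow k ▸ re_map_star_mul_self_nonneg hω (X ^ k)

variable [StarModule ℂ A]

/-- Polarize `star b * b` at `b = 1 + a` and `b = 1 + I • a`. -/
theorem map_star_of_nonneg (hω : ∀ a : A, 0 ≤ ω (star a * a)) (a : A) :
    ω (star a) = conj (ω a) := by
  have h₀ := im_map_star_mul_self hω 1
  have h₁ := im_map_star_mul_self hω (1 + a)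
  have h₂ := im_map_star_mul_self hω (1 + I • a)
  have ha := im_map_star_mul_self hω a
  simp only [star_add, star_one, star_smul, star_def, conj_I, add_mul, mul_add, one_mul,
    mul_one, smul_mul_assoc, mul_smul_comm, map_add, map_smul, smul_eq_mul, add_im, neg_mul,
    neg_im, neg_re, mul_im, mul_re, I_re, I_im, ha] at h₀ h₁ h₂
  apply Complex.ext <;> simp only [conj_re, conj_im] <;> linarith

theorem norm_map_star_mul_sq_le (hω : ∀ a : A, 0 ≤ ω (star a * a)) (a b : A) :
    ‖ω (star a * b)‖ ^ 2 ≤ (ω (star a * a)).re * (ω (star b * b)).re := by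
  let _ : PreInnerProductSpace.Core ℂ A :=
    { inner x y := ω (star x * y)
      conj_inner_symm x y := by rw [← map_star_of_nonneg hω, star_mul, star_star]
      re_inner_nonneg := re_map_star_mul_self_nonneg hω
      add_left x y z := by rw [star_add, add_mul, map_add]
      smul_left x y r := by rw [star_smul, smul_mul_assoc, map_smul, smul_eq_mul]; rfl }
  have h := InnerProductSpace.Core.inner_mul_inner_self_le (𝕜 := ℂ) a b
  rw [InnerProductSpace.Core.norm_inner_symm b a] at h
  exact (sq _).trans_le h

theorem re_map_pow_le (hω1 : ω 1 = 1) (hω : ∀ a : A, 0 ≤ ω (star a * a))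
    {X : A} (hX : IsSelfAdjoint X) {w R : ℕ} (hwR : w ≤ R) :
    (ω (X ^ (2 * w))).re ≤ ((ω (X ^ (2 * R))).re ^ (((2 * R : ℕ) : ℝ)⁻¹)) ^ (2 * w) := by
  set a : ℕ → ℝ := fun k ↦ (ω (X ^ (2 * k))).re
  have hnn : ∀ k, 0 ≤ a k := re_map_pow_two_mul_nonneg hω hX
  have hlc (k : ℕ) : a (k + 1) ^ 2 ≤ a k * a (k + 2) := by
    have h := norm_map_star_mul_sq_le hω (X ^ k) (X ^ (k + 2))
    rw [hX.star_pow_mul_pow, hX.star_pow_mul_pow, (hX.pow k).star_eq, ← pow_add,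
      show k + (k + 2) = 2 * (k + 1) by ring] at h
    exact (pow_le_pow_left₀ (hnn _) (re_le_norm _) 2).trans h
  rcases Nat.eq_zero_or_pos R with rfl | hR
  · obtain rfl : w = 0 := by omega
    simp [hω1]
  have hR' : 2 * R ≠ 0 := by omega
  refine (pow_le_pow_iff_left₀ (hnn w) (pow_nonneg (Real.rpow_nonneg (hnn R) _) _) hR.ne').1 ?_
  calc a w ^ R ≤ a R ^ w := pow_le_pow_of_sq_le_mul (by simp [a, hω1]) hnn hlc hwR
    _ = ((a R ^ (((2 * R : ℕ) : ℝ)⁻¹)) ^ (2 * R)) ^ w := by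
        rw [Real.rpow_inv_natCast_pow (hnn R) hR']
    _ = ((a R ^ (((2 * R : ℕ) : ℝ)⁻¹)) ^ (2 * w)) ^ R := by ring

end State

section NormalOrder

variable {R A : Type*} [CommRing R] [Ring A] [Algebra R A] {c : R} {φ π : A}

theorem mul_pow_eq_of_mul_sub_mul (hccr : φ * π - π * φ = c • 1) (k : ℕ) :
    φ * π ^ k = π ^ k * φ + (k * c) • π ^ (k - 1) := by
  have h₁ : φ * π = π * φ + c • 1 := by rw [← hccr]; abel
  induction k with
  | zero => simp
  | succ k ih =>
    have h₂ : (k * c) • (π ^ (k - 1) * π) = (k * c) • π ^ k := by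
      rcases k with _ | k
      · simp
      · rw [Nat.add_sub_cancel, ← pow_succ]
    rw [pow_succ, ← mul_assoc, ih, add_mul, mul_assoc, h₁, smul_mul_assoc, h₂, mul_add,
      mul_smul_comm, mul_one, ← mul_assoc, ← pow_succ, Nat.add_sub_cancel, add_assoc, ← add_smul]
    push_cast
    ring_nf

def normalOrderCoeff (c : R) (V b j : ℕ) : R :=
  c ^ j * j.factorial * V.choose j * b.choose j

theorem normalOrderCoeff_succ_succ (c : R) (V b j : ℕ) :
    normalOrderCoeff c V (b + 1) (j + 1) =
      normalOrderCoeff c V b (j + 1) + normalOrderCoeff c V b j * (V - j : ℕ) * c := by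
  have h : (V.choose (j + 1) * (j + 1) : R) = V.choose j * (V - j : ℕ) := by
    exact_mod_cast congrArg (Nat.cast (R := R)) (Nat.choose_succ_right_eq V j)
  simp only [normalOrderCoeff, Nat.factorial_succ, Nat.choose_succ_succ', pow_succ]
  push_cast
  linear_combination (c ^ j * c * j.factorial * b.choose j) * h

theorem pow_mul_pow_eq_sum_normalOrderCoeff (hccr : φ * π - π * φ = c • 1) (b V : ℕ) :
    φ ^ b * π ^ V =
      ∑ j ∈ range (b + 1), normalOrderCoeff c V b j • (π ^ (V - j) * φ ^ (b - j)) := by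
  induction b with
  | zero => simp [normalOrderCoeff]
  | succ b ih =>
    have hφ (j : ℕ) (hj : j ≤ b) : φ * (π ^ (V - j) * φ ^ (b - j)) =
        π ^ (V - j) * φ ^ (b + 1 - j) + ((V - j : ℕ) * c) • (π ^ (V - (j + 1)) * φ ^ (b - j)) := by
      rw [← mul_assoc, mul_pow_eq_of_mul_sub_mul hccr, add_mul, mul_assoc, ← pow_succ',
        smul_mul_assoc, Nat.sub_sub, Nat.sub_add_comm hj]
    have hlast : normalOrderCoeff c V b (b + 1) = 0 := by
      simp [normalOrderCoeff]
    have hshift : ∑ j ∈ range (b + 1), normalOrderCoeff c V b j • (π ^ (V - j) * φ ^ (b + 1 - j)) =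
        ∑ j ∈ range (b + 1), normalOrderCoeff c V b (j + 1) • (π ^ (V - (j + 1)) * φ ^ (b - j)) +
          normalOrderCoeff c V (b + 1) 0 • (π ^ (V - 0) * φ ^ (b + 1 - 0)) := by
      rw [show normalOrderCoeff c V (b + 1) 0 = normalOrderCoeff c V b 0 by simp [normalOrderCoeff]]
      simp_rw [← Nat.add_sub_add_right b 1]
      rw [← sum_range_succ' (fun j ↦ normalOrderCoeff c V b j • (π ^ (V - j) * φ ^ (b + 1 - j))),
        sum_range_succ _ (b + 1), hlast, zero_smul, add_zero]
    rw [pow_succ', mul_assoc, ih, mul_sum, sum_range_succ' _ (b + 1)]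
    simp_rw [normalOrderCoeff_succ_succ, add_smul, Nat.add_sub_add_right]
    rw [sum_add_distrib, add_right_comm, ← hshift, ← sum_add_distrib]
    refine sum_congr rfl fun j hj ↦ ?_
    rw [mul_smul_comm, hφ j (by simpa [Nat.lt_succ_iff] using hj), smul_add, smul_smul, mul_assoc]

end NormalOrder

theorem norm_normalOrderCoeff_I_le (V b j : ℕ) :
    ‖normalOrderCoeff I V b j‖ ≤ ((V : ℝ) * b) ^ j := by
  have h₁ : j.factorial * V.choose j ≤ V ^ j :=
    Nat.descFactorial_eq_factorial_mul_choose V j ▸ Nat.descFactorial_le_pow V j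
  have h₂ : j.factorial * V.choose j * b.choose j ≤ V ^ j * b ^ j :=
    Nat.mul_le_mul h₁ (Nat.choose_le_pow b j)
  simpa [normalOrderCoeff, mul_pow] using (Nat.cast_le (α := ℝ)).2 h₂

theorem norm_normalOrderCoeff_I_mul_le {D C : ℝ} (hC : 0 ≤ C) (hCD : C ≤ D) {V q j : ℕ}
    (hVq : 2 * ((V : ℝ) * q) ≤ C ^ 2) (hj : j ≤ q) :
    ‖normalOrderCoeff I V q j‖ * (D ^ (V - j) * C ^ (2 * q - j)) ≤
      (1 / 2) ^ j * (D ^ V * C ^ (2 * q)) := by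
  have hD : 0 ≤ D := hC.trans hCD
  rcases lt_or_ge V j with hVj | hjV
  · simp only [normalOrderCoeff, Nat.choose_eq_zero_of_lt hVj, Nat.cast_zero, mul_zero,
      zero_mul, norm_zero]
    positivity
  calc ‖normalOrderCoeff I V q j‖ * (D ^ (V - j) * C ^ (2 * q - j))
      ≤ (C ^ 2 / 2) ^ j * (D ^ (V - j) * C ^ (2 * q - j)) := by
        gcongr
        exact (norm_normalOrderCoeff_I_le V q j).trans
          (pow_le_pow_left₀ (by positivity) (by linarith) j)
    _ = (1 / 2) ^ j * ((C ^ j * D ^ (V - j)) * (C ^ j * C ^ (2 * q - j))) := by ring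
    _ ≤ (1 / 2) ^ j * ((D ^ j * D ^ (V - j)) * (C ^ j * C ^ (2 * q - j))) := by gcongr
    _ = (1 / 2) ^ j * (D ^ V * C ^ (2 * q)) := by
        rw [← pow_add, ← pow_add, Nat.add_sub_cancel' hjV, Nat.add_sub_cancel' (by omega)]

section Sandwich

variable {A : Type*} [Ring A] [Algebra ℂ A] {ω : A →ₗ[ℂ] ℂ} {φ π : A}

theorem norm_map_pow_mul_pow_mul_pow_mul_le {Z : A}
    (hccr : φ * π - π * φ = I • 1) {B D C : ℝ} (hB : 0 ≤ B) (hC : 0 ≤ C) (hCD : C ≤ D)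
    {V q : ℕ} (hVq : 2 * ((V : ℝ) * q) ≤ C ^ 2)
    (hterm : ∀ j ≤ q,
      ‖ω (π ^ (V - j) * φ ^ (2 * q - j) * Z)‖ ≤ B * D ^ (V - j) * C ^ (2 * q - j)) :
    ‖ω (φ ^ q * π ^ V * φ ^ q * Z)‖ ≤ 2 * B * D ^ V * C ^ (2 * q) := by
  have hexpand : ω (φ ^ q * π ^ V * φ ^ q * Z) =
      ∑ j ∈ range (q + 1), normalOrderCoeff I V q j * ω (π ^ (V - j) * φ ^ (2 * q - j) * Z) := by
    rw [pow_mul_pow_eq_sum_normalOrderCoeff hccr, sum_mul, sum_mul, map_sum]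
    refine sum_congr rfl fun j hj ↦ ?_
    rw [smul_mul_assoc, smul_mul_assoc, map_smul, smul_eq_mul, mul_assoc (π ^ _), ← pow_add,
      show q - j + q = 2 * q - j by have := mem_range.1 hj; omega]
  calc ‖ω (φ ^ q * π ^ V * φ ^ q * Z)‖
      ≤ ∑ j ∈ range (q + 1), ‖normalOrderCoeff I V q j‖ * (B * D ^ (V - j) * C ^ (2 * q - j)) := by
        rw [hexpand]
        refine (norm_sum_le _ _).trans (sum_le_sum fun j hj ↦ ?_)
        rw [norm_mul]
        exact mul_le_mul_of_nonneg_left (hterm j (Nat.lt_succ_iff.1 (mem_range.1 hj)))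
          (norm_nonneg _)
    _ ≤ ∑ j ∈ range (q + 1), B * D ^ V * C ^ (2 * q) * (1 / 2) ^ j := by
        refine sum_le_sum fun j hj ↦ ?_
        have := norm_normalOrderCoeff_I_mul_le hC hCD hVq (Nat.lt_succ_iff.1 (mem_range.1 hj))
        nlinarith
    _ ≤ B * D ^ V * C ^ (2 * q) * 2 := by
        rw [← mul_sum]
        have hD : 0 ≤ D := hC.trans hCD
        exact mul_le_mul_of_nonneg_left (sum_geometric_two_le _) (by positivity)
    _ = 2 * B * D ^ V * C ^ (2 * q) := by ring

end Sandwich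

theorem le_mul_of_two_mul_le_mul_sub {k n m p : ℕ} (h : 2 * k ≤ n * (2 * m - p)) :
    k ≤ n * m := by
  have := Nat.mul_le_mul_left n (Nat.sub_le (2 * m) p)
  rw [mul_left_comm] at this
  omega

theorem two_mul_add_le_of_two_mul_le {n m r q u j : ℕ}
    (h : 2 * (q + u) ≤ n * (2 * m - (m + r))) (hj : j ≤ q) :
    2 * (2 * q - j + 2 * u) ≤ n * (2 * m - (2 * r - j)) := by
  have : n * (2 * m - 2 * r) ≤ n * (2 * m - (2 * r - j)) := Nat.mul_le_mul_left n (by omega)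
  rw [show 2 * m - 2 * r = 2 * (2 * m - (m + r)) by omega, mul_left_comm] at this
  omega

section Moments

variable {A : Type*} [Ring A] [Algebra ℂ A]

structure EvenMomentBounds (ω : A →ₗ[ℂ] ℂ) (φ π Φ₀ : A) (m n : ℕ) (γ D C : ℝ) : Prop where
  re_π : ∀ p ≤ m, (ω (π ^ (2 * p))).re ≤ D ^ (2 * p)
  re_φ : ∀ t ≤ 2 * (n * m), (ω (φ ^ (2 * t))).re ≤ C ^ (2 * t)
  re_Φ₀ : ∀ u ≤ n * m, (ω (Φ₀ ^ (2 * u))).re ≤ γ ^ (2 * u)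
  γ_nonneg : 0 ≤ γ
  C_nonneg : 0 ≤ C
  C_le_D : C ≤ D
  four_mul_le_sq : 4 * ((m : ℝ) * (n * m)) ≤ C ^ 2

variable {ω : A →ₗ[ℂ] ℂ} {φ π Φ₀ : A} {m n : ℕ} {γ D C : ℝ}

namespace EvenMomentBounds

theorem D_nonneg (hM : EvenMomentBounds ω φ π Φ₀ m n γ D C) : 0 ≤ D :=
  hM.C_nonneg.trans hM.C_le_D

theorem two_mul_le_sq (hM : EvenMomentBounds ω φ π Φ₀ m n γ D C) {V q : ℕ} (hV : V ≤ 2 * m)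
    (hq : q ≤ n * m) : 2 * ((V : ℝ) * q) ≤ C ^ 2 := by
  have hV' : (V : ℝ) ≤ 2 * m := by exact_mod_cast hV
  have hq' : (q : ℝ) ≤ n * m := by exact_mod_cast hq
  nlinarith [hM.four_mul_le_sq, mul_le_mul hV' hq' (Nat.cast_nonneg q) (by positivity)]

end EvenMomentBounds

variable [StarRing A]

structure IsCCRState (ω : A →ₗ[ℂ] ℂ) (φ π Φ₀ : A) : Prop where
  nonneg : ∀ a, 0 ≤ ω (star a * a)
  isSelfAdjoint_φ : IsSelfAdjoint φ
  isSelfAdjoint_π : IsSelfAdjoint π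
  isSelfAdjoint_Φ₀ : IsSelfAdjoint Φ₀
  ccr : φ * π - π * φ = I • 1
  commute_φ : Commute Φ₀ φ
  commute_π : Commute Φ₀ π

namespace IsCCRState

theorem star_mul_self_eq (hS : IsCCRState ω φ π Φ₀) (r q u : ℕ) :
    star (π ^ r * φ ^ q * Φ₀ ^ u) * (π ^ r * φ ^ q * Φ₀ ^ u) =
      φ ^ q * π ^ (2 * r) * φ ^ q * Φ₀ ^ (2 * u) := by
  have hc : Commute (Φ₀ ^ u) (φ ^ q * π ^ (2 * r) * φ ^ q) :=
    (((hS.commute_φ.pow_pow u q).mul_right (hS.commute_π.pow_pow u (2 * r))).mul_right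
      (hS.commute_φ.pow_pow u q))
  simp only [star_mul, (hS.isSelfAdjoint_π.pow r).star_eq, (hS.isSelfAdjoint_φ.pow q).star_eq,
    (hS.isSelfAdjoint_Φ₀.pow u).star_eq]
  calc _ = Φ₀ ^ u * (φ ^ q * π ^ (2 * r) * φ ^ q) * Φ₀ ^ u := by
        simp only [two_mul, pow_add, mul_assoc]
    _ = φ ^ q * π ^ (2 * r) * φ ^ q * Φ₀ ^ (2 * u) := by
        rw [hc.eq, mul_assoc, ← pow_add, ← two_mul]

theorem norm_map_eq_norm_map_star_mul [StarModule ℂ A] (hS : IsCCRState ω φ π Φ₀)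
    (p q u : ℕ) : ‖ω (π ^ p * φ ^ q * Φ₀ ^ u)‖ = ‖ω (star (π ^ p * φ ^ q) * Φ₀ ^ u)‖ := by
  have hc : Commute (Φ₀ ^ u) (φ ^ q * π ^ p) :=
    (hS.commute_φ.pow_pow u q).mul_right (hS.commute_π.pow_pow u p)
  rw [← norm_conj, ← map_star_of_nonneg hS.nonneg, star_mul, star_mul,
    (hS.isSelfAdjoint_π.pow p).star_eq, (hS.isSelfAdjoint_φ.pow q).star_eq,
    (hS.isSelfAdjoint_Φ₀.pow u).star_eq, hc.eq]

theorem evenMomentBounds [StarModule ℂ A] (hS : IsCCRState ω φ π Φ₀) (hω1 : ω 1 = 1) {c₁ : ℝ}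
    (hc₁ : 1 ≤ c₁) (hmom : ∀ t : ℕ, 1 ≤ t → (ω (φ ^ (2 * t))).re ≤ (c₁ * t) ^ (2 * t))
    (m n : ℕ) :
    EvenMomentBounds ω φ π Φ₀ m n ((ω (Φ₀ ^ (2 * n * m))).re ^ (((2 * n * m : ℕ) : ℝ)⁻¹))
      (max ((ω (π ^ (2 * m))).re ^ (((2 * m : ℕ) : ℝ)⁻¹)) (2 * c₁ * n * m)) (2 * c₁ * n * m) where
  re_π p hp := (re_map_pow_le hω1 hS.nonneg hS.isSelfAdjoint_π hp).trans <|
    pow_le_pow_left₀ (Real.rpow_nonneg (re_map_pow_two_mul_nonneg hS.nonneg hS.isSelfAdjoint_π m) _)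
      (le_max_left _ _) _
  re_φ t ht := by
    rcases Nat.eq_zero_or_pos t with rfl | ht₀
    · simp [hω1]
    refine (hmom t ht₀).trans (pow_le_pow_left₀ (by positivity) ?_ _)
    have : (t : ℝ) ≤ 2 * (n * m) := by exact_mod_cast ht
    nlinarith
  re_Φ₀ u hu := by
    simpa only [mul_assoc] using re_map_pow_le hω1 hS.nonneg hS.isSelfAdjoint_Φ₀ hu
  γ_nonneg := Real.rpow_nonneg
    (mul_assoc 2 n m ▸ re_map_pow_two_mul_nonneg hS.nonneg hS.isSelfAdjoint_Φ₀ _) _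
  C_nonneg := by positivity
  C_le_D := le_max_right _ _
  four_mul_le_sq := by
    have hn : (n : ℝ) ≤ n ^ 2 := by exact_mod_cast Nat.le_self_pow two_ne_zero n
    have hm := sq_nonneg (m : ℝ)
    nlinarith [mul_le_mul_of_nonneg_left hn hm, mul_nonneg (sq_nonneg (n : ℝ)) hm,
      mul_le_mul_of_nonneg_right (one_le_pow₀ (n := 2) hc₁) (mul_nonneg (sq_nonneg (n : ℝ)) hm)]

end IsCCRState

namespace EvenMomentBounds

variable [StarModule ℂ A]

theorem norm_le_of_two_mul_le (hS : IsCCRState ω φ π Φ₀)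
    (hM : EvenMomentBounds ω φ π Φ₀ m n γ D C) {p q u : ℕ} (hp : p ≤ m) (hq : q ≤ n * m)
    (hu : 2 * u ≤ n * m) :
    ‖ω (π ^ p * φ ^ q * Φ₀ ^ u)‖ ≤ γ ^ u * D ^ p * C ^ q := by
  have hX : ‖ω (star (Φ₀ ^ (2 * u)) * φ ^ (2 * q))‖ ≤ γ ^ (2 * u) * C ^ (2 * q) := by
    refine le_of_pow_le_pow_left₀ two_ne_zero
      (mul_nonneg (pow_nonneg hM.γ_nonneg _) (pow_nonneg hM.C_nonneg _)) ?_
    calc ‖ω (star (Φ₀ ^ (2 * u)) * φ ^ (2 * q))‖ ^ 2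
        ≤ (ω (Φ₀ ^ (2 * (2 * u)))).re * (ω (φ ^ (2 * (2 * q)))).re := by
          simpa only [hS.isSelfAdjoint_Φ₀.star_pow_mul_pow, hS.isSelfAdjoint_φ.star_pow_mul_pow]
            using norm_map_star_mul_sq_le hS.nonneg (Φ₀ ^ (2 * u)) (φ ^ (2 * q))
      _ ≤ γ ^ (2 * (2 * u)) * C ^ (2 * (2 * q)) :=
          mul_le_mul (hM.re_Φ₀ _ hu) (hM.re_φ _ (by omega))
            (re_map_pow_two_mul_nonneg hS.nonneg hS.isSelfAdjoint_φ _)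
            (pow_nonneg hM.γ_nonneg _)
      _ = (γ ^ (2 * u) * C ^ (2 * q)) ^ 2 := by ring
  have hY : star (φ ^ q * Φ₀ ^ u) * (φ ^ q * Φ₀ ^ u) = star (Φ₀ ^ (2 * u)) * φ ^ (2 * q) := by
    have hc := hS.commute_φ.pow_pow u q
    rw [star_mul, (hS.isSelfAdjoint_φ.pow q).star_eq, (hS.isSelfAdjoint_Φ₀.pow _).star_eq,
      (hS.isSelfAdjoint_Φ₀.pow _).star_eq, two_mul, two_mul, pow_add, pow_add, ← hc.eq,
      mul_assoc, ← mul_assoc (φ ^ q), ← hc.eq]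
    simp only [mul_assoc]
  refine le_of_pow_le_pow_left₀ two_ne_zero
    (mul_nonneg (mul_nonneg (pow_nonneg hM.γ_nonneg _) (pow_nonneg hM.D_nonneg _))
      (pow_nonneg hM.C_nonneg _)) ?_
  calc ‖ω (π ^ p * φ ^ q * Φ₀ ^ u)‖ ^ 2 = ‖ω (star (π ^ p) * (φ ^ q * Φ₀ ^ u))‖ ^ 2 := by
        rw [(hS.isSelfAdjoint_π.pow p).star_eq, mul_assoc]
    _ ≤ (ω (π ^ (2 * p))).re * (ω (star (Φ₀ ^ (2 * u)) * φ ^ (2 * q))).re := by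
        simpa only [hS.isSelfAdjoint_π.star_pow_mul_pow, hY]
          using norm_map_star_mul_sq_le hS.nonneg (π ^ p) (φ ^ q * Φ₀ ^ u)
    _ ≤ D ^ (2 * p) * (γ ^ (2 * u) * C ^ (2 * q)) :=
        mul_le_mul (hM.re_π p hp) ((re_le_norm _).trans hX)
          (hY ▸ re_map_star_mul_self_nonneg hS.nonneg _) (pow_nonneg hM.D_nonneg _)
    _ = (γ ^ u * D ^ p * C ^ q) ^ 2 := by ring

theorem norm_pow_add_le (hS : IsCCRState ω φ π Φ₀) (hM : EvenMomentBounds ω φ π Φ₀ m n γ D C)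
    {r q u : ℕ} (hr : r ≤ m) (hq : q ≤ n * m)
    (hterm : ∀ j ≤ q, ‖ω (π ^ (2 * r - j) * φ ^ (2 * q - j) * Φ₀ ^ (2 * u))‖ ≤
      3 * γ ^ (2 * u) * D ^ (2 * r - j) * C ^ (2 * q - j)) :
    ‖ω (π ^ (m + r) * φ ^ q * Φ₀ ^ u)‖ ≤ 3 * γ ^ u * D ^ (m + r) * C ^ q := by
  have hγ := hM.γ_nonneg
  have hD := hM.D_nonneg
  have hC := hM.C_nonneg
  have hsandwich := norm_map_pow_mul_pow_mul_pow_mul_le hS.ccr (by positivity) hC hM.C_le_D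
    (hM.two_mul_le_sq (by omega) hq) hterm
  refine le_of_pow_le_pow_left₀ two_ne_zero (by positivity) ?_
  calc ‖ω (π ^ (m + r) * φ ^ q * Φ₀ ^ u)‖ ^ 2
      = ‖ω (star (π ^ m) * (π ^ r * φ ^ q * Φ₀ ^ u))‖ ^ 2 := by
        rw [(hS.isSelfAdjoint_π.pow m).star_eq, ← mul_assoc, ← mul_assoc, ← pow_add]
    _ ≤ (ω (π ^ (2 * m))).re * (ω (φ ^ q * π ^ (2 * r) * φ ^ q * Φ₀ ^ (2 * u))).re := by
        simpa only [hS.isSelfAdjoint_π.star_pow_mul_pow, hS.star_mul_self_eq]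
          using norm_map_star_mul_sq_le hS.nonneg (π ^ m) (π ^ r * φ ^ q * Φ₀ ^ u)
    _ ≤ D ^ (2 * m) * (2 * (3 * γ ^ (2 * u)) * D ^ (2 * r) * C ^ (2 * q)) :=
        mul_le_mul (hM.re_π m le_rfl) ((re_le_norm _).trans hsandwich)
          (hS.star_mul_self_eq r q u ▸ re_map_star_mul_self_nonneg hS.nonneg _) (by positivity)
    _ = 6 * (γ ^ u * D ^ (m + r) * C ^ q) ^ 2 := by ring
    _ ≤ (3 * γ ^ u * D ^ (m + r) * C ^ q) ^ 2 := by
        linarith [sq_nonneg (γ ^ u * D ^ (m + r) * C ^ q)]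

theorem norm_le_of_forall_norm_le (hS : IsCCRState ω φ π Φ₀)
    (hM : EvenMomentBounds ω φ π Φ₀ m n γ D C) {p q u : ℕ} (hp : p ≤ m) (hq : q ≤ n * m)
    (hu : u ≤ n * m)
    (hterm : ∀ j ≤ q,
      ‖ω (π ^ (2 * p - j) * φ ^ (2 * q - j))‖ ≤ 3 * D ^ (2 * p - j) * C ^ (2 * q - j)) :
    ‖ω (π ^ p * φ ^ q * Φ₀ ^ u)‖ ≤ 3 * γ ^ u * D ^ p * C ^ q := by
  have hγ := hM.γ_nonneg
  have hD := hM.D_nonneg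
  have hC := hM.C_nonneg
  have hsandwich := norm_map_pow_mul_pow_mul_pow_mul_le (ω := ω) (Z := 1) (B := 3) (V := 2 * p)
    hS.ccr (by norm_num) hC hM.C_le_D (hM.two_mul_le_sq (by omega) hq)
    (by simpa only [mul_one] using hterm)
  have hx : star (π ^ p * φ ^ q) * (π ^ p * φ ^ q) = φ ^ q * π ^ (2 * p) * φ ^ q * 1 := by
    simpa only [pow_zero, mul_one, mul_zero] using hS.star_mul_self_eq p q 0
  refine le_of_pow_le_pow_left₀ two_ne_zero (by positivity) ?_
  calc ‖ω (π ^ p * φ ^ q * Φ₀ ^ u)‖ ^ 2 = ‖ω (star (π ^ p * φ ^ q) * Φ₀ ^ u)‖ ^ 2 := by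
        rw [hS.norm_map_eq_norm_map_star_mul]
    _ ≤ (ω (φ ^ q * π ^ (2 * p) * φ ^ q * 1)).re * (ω (Φ₀ ^ (2 * u))).re := by
        simpa only [hx, hS.isSelfAdjoint_Φ₀.star_pow_mul_pow]
          using norm_map_star_mul_sq_le hS.nonneg (π ^ p * φ ^ q) (Φ₀ ^ u)
    _ ≤ 2 * 3 * D ^ (2 * p) * C ^ (2 * q) * γ ^ (2 * u) :=
        mul_le_mul ((re_le_norm _).trans hsandwich) (hM.re_Φ₀ u hu)
          (re_map_pow_two_mul_nonneg hS.nonneg hS.isSelfAdjoint_Φ₀ u) (by positivity)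
    _ = 6 * (γ ^ u * D ^ p * C ^ q) ^ 2 := by ring
    _ ≤ (3 * γ ^ u * D ^ p * C ^ q) ^ 2 := by
        linarith [sq_nonneg (γ ^ u * D ^ p * C ^ q)]

theorem norm_pow_mul_pow_le (hS : IsCCRState ω φ π Φ₀)
    (hM : EvenMomentBounds ω φ π Φ₀ m n γ D C) {p q : ℕ} (hp : p < 2 * m)
    (hpq : 2 * q ≤ n * (2 * m - p)) :
    ‖ω (π ^ p * φ ^ q)‖ ≤ 3 * D ^ p * C ^ q := by
  induction p using Nat.strong_induction_on generalizing q with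
  | _ p ih =>
  have hq : q ≤ n * m := le_mul_of_two_mul_le_mul_sub hpq
  rcases lt_or_ge p m with hpm | hmp
  · have h := hM.norm_le_of_two_mul_le hS hpm.le hq (u := 0) (by omega)
    have := mul_nonneg (pow_nonneg hM.D_nonneg p) (pow_nonneg hM.C_nonneg q)
    simp only [pow_zero, mul_one, one_mul] at h
    linarith
  · obtain ⟨r, rfl⟩ := Nat.exists_eq_add_of_le hmp
    have hterm (j : ℕ) (hj : j ≤ q) :
        ‖ω (π ^ (2 * r - j) * φ ^ (2 * q - j))‖ ≤ 3 * D ^ (2 * r - j) * C ^ (2 * q - j) :=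
      ih (2 * r - j) (by omega) (by omega)
        (by simpa using two_mul_add_le_of_two_mul_le (u := 0) (by simpa using hpq) hj)
    simpa only [pow_zero, mul_zero, mul_one] using hM.norm_pow_add_le hS (u := 0) (by omega) hq
      (by simpa only [pow_zero, mul_zero, mul_one] using hterm)

theorem norm_pow_mul_pow_mul_pow_le (hS : IsCCRState ω φ π Φ₀)
    (hM : EvenMomentBounds ω φ π Φ₀ m n γ D C) {p q u : ℕ} (hp : p < 2 * m)
    (hpqu : 2 * (q + u) ≤ n * (2 * m - p)) :
    ‖ω (π ^ p * φ ^ q * Φ₀ ^ u)‖ ≤ 3 * γ ^ u * D ^ p * C ^ q := by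
  induction p using Nat.strong_induction_on generalizing q u with
  | _ p ih =>
  have hqu : q + u ≤ n * m := le_mul_of_two_mul_le_mul_sub hpqu
  rcases lt_or_ge p m with hpm | hmp
  · rcases le_or_gt (2 * u) (n * m) with hu | hu
    · have h := hM.norm_le_of_two_mul_le hS hpm.le (by omega) hu (q := q)
      have := mul_nonneg (mul_nonneg (pow_nonneg hM.γ_nonneg u) (pow_nonneg hM.D_nonneg p))
        (pow_nonneg hM.C_nonneg q)
      linarith
    · refine hM.norm_le_of_forall_norm_le hS hpm.le (by omega) (by omega) fun j hj ↦
        hM.norm_pow_mul_pow_le hS (by omega) ?_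
      have : n * (2 * m - 2 * p) ≤ n * (2 * m - (2 * p - j)) := Nat.mul_le_mul_left n (by omega)
      simp only [Nat.mul_sub, mul_left_comm n 2] at hpqu this ⊢
      omega
  · obtain ⟨r, rfl⟩ := Nat.exists_eq_add_of_le hmp
    exact hM.norm_pow_add_le hS (by omega) (by omega) fun j hj ↦
      ih (2 * r - j) (by omega) (by omega) (two_mul_add_le_of_two_mul_le hpqu hj)

end EvenMomentBounds

end Moments

theorem max_rpow_inv_pow_mul_pow {P C : ℝ} (hP : 0 ≤ P) (hC : 0 ≤ C) {M s s' : ℕ} (hM : M ≠ 0)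
    (hs : s ≤ M) :
    max (P ^ ((M : ℝ)⁻¹)) C ^ (M - s) * C ^ s' =
      max (P ^ (1 - (s : ℝ) / M) * C ^ s') (C ^ (M + s' - s)) := by
  rw [pow_left_monotoneOn.map_max (Real.rpow_nonneg hP _) hC,
    max_mul_of_nonneg _ _ (pow_nonneg hC _), ← Real.rpow_mul_natCast hP, ← pow_add,
    Nat.sub_add_comm hs, Nat.cast_sub hs]
  congr 3
  field_simp

theorem stmt_7_general {A : Type*} [Ring A] [Algebra ℂ A] [StarRing A] [StarModule ℂ A]
    (ω : A →ₗ[ℂ] ℂ) (hω1 : ω 1 = 1) (hωpos : ∀ a : A, 0 ≤ ω (star a * a))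
    (φ π Φ₀ : A) (hφ : star φ = φ) (hπ : star π = π) (hΦ : star Φ₀ = Φ₀)
    (hccr : φ * π - π * φ = Complex.I • (1 : A))
    (hcφ : Φ₀ * φ = φ * Φ₀) (hcπ : Φ₀ * π = π * Φ₀)
    (c₁ : ℝ) (hc₁ : 1 ≤ c₁)
    (hmom : ∀ t : ℕ, 1 ≤ t → (ω (φ ^ (2 * t))).re ≤ (c₁ * t) ^ (2 * t))
    (n : ℕ) :
    ∀ m s s' s'' : ℕ, 1 ≤ m → 1 ≤ s → s ≤ 2 * m → 2 * (s' + s'') ≤ n * s →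
      ‖ω (π ^ (2 * m - s) * φ ^ s' * Φ₀ ^ s'')‖ ≤
        3 * (ω (Φ₀ ^ (2 * n * m))).re ^ ((s'' : ℝ) / (2 * n * m)) *
          max ((ω (π ^ (2 * m))).re ^ (1 - (s : ℝ) / (2 * m)) *
                (2 * c₁ * n * m) ^ s')
              ((2 * c₁ * n * m) ^ (2 * m + s' - s)) := by
  intro m s s' s'' hm hs hs2m hbud
  have hS : IsCCRState ω φ π Φ₀ := ⟨hωpos, hφ, hπ, hΦ, hccr, hcφ, hcπ⟩
  have hM := hS.evenMomentBounds hω1 hc₁ hmom m n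
  have hP := re_map_pow_two_mul_nonneg hωpos hπ m
  have hG := re_map_pow_two_mul_nonneg hωpos hΦ (n * m)
  rw [← mul_assoc] at hG
  refine (hM.norm_pow_mul_pow_mul_pow_le hS (by omega) (by rwa [Nat.sub_sub_self hs2m])).trans
    (le_of_eq ?_)
  rw [mul_assoc _ (_ ^ (2 * m - s)), max_rpow_inv_pow_mul_pow hP hM.C_nonneg (by omega) hs2m,
    ← Real.rpow_mul_natCast hG, inv_mul_eq_div]
  norm_num

/-- Moment separation bound (Proposition 6 of the paper, with `n = 2κ`):
for a state `ω` on a unital ℂ-star-algebra, self-adjoint `φ, π` with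
`φπ - πφ = i·1` and self-adjoint `Φ₀` commuting with `φ, π`, if `c₁ ≥ 1` and
`⟨φ^{2t}⟩ ≤ (c₁ t)^{2t}` for all `t ≥ 1`, then for all `m ≥ 1`, `1 ≤ s ≤ 2m`,
and `s', s''` with `2(s' + s'') ≤ n s`,
`|⟨π^{2m-s} φ^{s'} Φ₀^{s''}⟩| ≤ 3 ⟨Φ₀^{2nm}⟩^{s''/(2nm)} ·
  max( ⟨π^{2m}⟩^{1-s/(2m)} (2c₁nm)^{s'}, (2c₁nm)^{2m+s'-s} )`. -/
theorem stmt_7 {A : Type*} [Ring A] [Algebra ℂ A] [StarRing A] [StarModule ℂ A]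
    (ω : A →ₗ[ℂ] ℂ) (hω1 : ω 1 = 1) (hωpos : ∀ a : A, 0 ≤ ω (star a * a))
    (φ π Φ₀ : A) (hφ : star φ = φ) (hπ : star π = π) (hΦ : star Φ₀ = Φ₀)
    (hccr : φ * π - π * φ = Complex.I • (1 : A))
    (hcφ : Φ₀ * φ = φ * Φ₀) (hcπ : Φ₀ * π = π * Φ₀)
    (c₁ : ℝ) (hc₁ : 1 ≤ c₁)
    (hmom : ∀ t : ℕ, 1 ≤ t → (ω (φ ^ (2 * t))).re ≤ (c₁ * t) ^ (2 * t))
    (n : ℕ) (hn : 1 ≤ n) :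
    ∀ m s s' s'' : ℕ, 1 ≤ m → 1 ≤ s → s ≤ 2 * m → 2 * (s' + s'') ≤ n * s →
      ‖ω (π ^ (2 * m - s) * φ ^ s' * Φ₀ ^ s'')‖ ≤
        3 * (ω (Φ₀ ^ (2 * n * m))).re ^ ((s'' : ℝ) / (2 * n * m)) *
          max ((ω (π ^ (2 * m))).re ^ (1 - (s : ℝ) / (2 * m)) *
                (2 * c₁ * n * m) ^ s')
              ((2 * c₁ * n * m) ^ (2 * m + s' - s)) :=
  stmt_7_general ω hω1 hωpos φ π Φ₀ hφ hπ hΦ hccr hcφ hcπ c₁ hc₁ hmom n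
end

section
/- Let P ≥ 0, Q ≥ 0, G > 0 and κ > 0 be real numbers, let m₀ ≥ 1 and s, s', s'' be natural numbers, and for p ∈ ℕ set s_p := 2^p(s+1), s'_p := 2^p s', s''_p := 2^p s'', and W_p := Q^{s''_p/(4κm₀)} · max( P^{1 − s_p/(2m₀)} · G^{s'_p}, G^{2m₀ + s'_p − s_p} ) (all powers being real powers). If 2^p (s + 1) ≤ 2 m₀, then P^{1 − 2^{−p}} · W_p^{2^{−p}} ≤ W₀. -/
/-!
Write `t = 2^{-p}`, `u = (s+1)/(2m₀)` and `m = max(P, G^{2m₀})`, so that `u ≤ t ≤ 1`.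
Both branches of the max defining `W_p` share the factor `G^{s'_p}`, and what remains is
`m^{1 - 2^p u}`. Hence `W_p^t = Q^{s''/(4κm₀)} G^{s'} m^{t-u}`, and the claim reduces to
`P^{1-t} m^{t-u} ≤ m^{1-u}`, which holds because `P ≤ m`.
-/

open Real

lemma rpow_mul_inv_rpow {x : ℝ} (hx : 0 ≤ x) {T : ℝ} (hT : T ≠ 0) (a : ℝ) :
    (x ^ (T * a)) ^ T⁻¹ = x ^ a := by
  rw [← rpow_mul hx, mul_right_comm, mul_inv_cancel₀ hT, one_mul]

lemma rpow_mul_rpow_le_rpow_add {x m a b : ℝ} (hx : 0 ≤ x) (hxm : x ≤ m) (ha : 0 ≤ a)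
    (hb : 0 ≤ b) : x ^ a * m ^ b ≤ m ^ (a + b) :=
  calc x ^ a * m ^ b ≤ m ^ a * m ^ b :=
        mul_le_mul_of_nonneg_right (rpow_le_rpow hx hxm ha) (rpow_nonneg (hx.trans hxm) b)
    _ = m ^ (a + b) := (rpow_add_of_nonneg (hx.trans hxm) ha hb).symm

lemma rpow_one_sub_inv_mul_rpow_le {x m T u : ℝ} (hx : 0 ≤ x) (hxm : x ≤ m) (hT : 1 ≤ T)
    (hTu : T * u ≤ 1) : x ^ (1 - T⁻¹) * (m ^ (1 - T * u)) ^ T⁻¹ ≤ m ^ (1 - u) := by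
  have hT₀ : 0 < T := zero_lt_one.trans_le hT
  have hexp : (1 - T * u) * T⁻¹ = T⁻¹ - u := by field_simp
  have hu : u ≤ T⁻¹ := by rwa [← one_div, le_div_iff₀ hT₀, mul_comm]
  rw [← rpow_mul (hx.trans hxm), hexp, ← sub_add_sub_cancel 1 T⁻¹ u]
  exact rpow_mul_rpow_le_rpow_add hx hxm (sub_nonneg.mpr (inv_le_one_of_one_le₀ hT))
    (sub_nonneg.mpr hu)

lemma max_rpow_sub_div_mul_rpow {P G M n σ : ℝ} (hP : 0 ≤ P) (hG : 0 < G) (hM : 0 < M)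
    (hn : n ≤ M) :
    max (P ^ (1 - n / M) * G ^ σ) (G ^ (M + σ - n)) = max P (G ^ M) ^ (1 - n / M) * G ^ σ := by
  have hsplit : G ^ (M + σ - n) = (G ^ M) ^ (1 - n / M) * G ^ σ := by
    rw [← rpow_mul hG.le, ← rpow_add hG]
    congr 1
    field_simp
    ring
  have hexp : 0 ≤ 1 - n / M := sub_nonneg.mpr ((div_le_one hM).mpr hn)
  rw [hsplit, rpow_max hP (by positivity) hexp, max_mul_of_nonneg _ _ (by positivity)]

theorem stmt_9_general (P Q G κ : ℝ) (hP : 0 ≤ P) (hQ : 0 ≤ Q) (hG : 0 < G)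
    (m₀ : ℕ) (s s' s'' : ℕ) (p : ℕ)
    (hp : 2 ^ p * (s + 1) ≤ 2 * m₀) :
    P ^ (1 - ((2 : ℝ) ^ p)⁻¹) *
      (Q ^ (((2 ^ p * s'' : ℕ) : ℝ) / (4 * κ * m₀)) *
        max (P ^ (1 - ((2 ^ p * (s + 1) : ℕ) : ℝ) / (2 * m₀)) *
              G ^ (((2 ^ p * s' : ℕ) : ℝ)))
            (G ^ ((2 * m₀ : ℝ) + ((2 ^ p * s' : ℕ) : ℝ) -
              ((2 ^ p * (s + 1) : ℕ) : ℝ)))) ^ (((2 : ℝ) ^ p)⁻¹) ≤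
      Q ^ ((s'' : ℝ) / (4 * κ * m₀)) *
        max (P ^ (1 - ((s : ℝ) + 1) / (2 * m₀)) * G ^ ((s' : ℝ)))
            (G ^ ((2 * m₀ : ℝ) + (s' : ℝ) - ((s : ℝ) + 1))) := by
  have hp' : (2 : ℝ) ^ p * (s + 1) ≤ 2 * m₀ := by exact_mod_cast hp
  have hT : (1 : ℝ) ≤ 2 ^ p := one_le_pow₀ one_le_two
  have hs : (s : ℝ) + 1 ≤ 2 * m₀ := by nlinarith [s.cast_nonneg (α := ℝ)]
  have hM : (0 : ℝ) < 2 * m₀ := by linarith [s.cast_nonneg (α := ℝ)]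
  push_cast
  rw [max_rpow_sub_div_mul_rpow hP hG hM hp', max_rpow_sub_div_mul_rpow hP hG hM hs]
  simp only [mul_div_assoc]
  rw [mul_rpow (by positivity) (by positivity), mul_rpow (by positivity) (by positivity),
    rpow_mul_inv_rpow hQ (by positivity), rpow_mul_inv_rpow hG.le (by positivity)]
  rw [mul_left_comm, ← mul_assoc (P ^ _)]
  gcongr
  exact rpow_one_sub_inv_mul_rpow_le hP (le_max_left _ _) hT
    (by rwa [← mul_div_assoc, div_le_one hM])

/-- Auxiliary real-power inequality (Lemma 11 of the paper): with
`s_p = 2^p(s+1)`, `s'_p = 2^p s'`, `s''_p = 2^p s''` and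
`W_p = Q^{s''_p/(4κm₀)} · max(P^{1-s_p/(2m₀)} G^{s'_p}, G^{2m₀+s'_p-s_p})`,
if `2^p (s+1) ≤ 2m₀` then `P^{1-2^{-p}} W_p^{2^{-p}} ≤ W₀`. -/
theorem stmt_9 (P Q G κ : ℝ) (hP : 0 ≤ P) (hQ : 0 ≤ Q) (hG : 0 < G) (hκ : 0 < κ)
    (m₀ : ℕ) (hm₀ : 1 ≤ m₀) (s s' s'' : ℕ) (p : ℕ)
    (hp : 2 ^ p * (s + 1) ≤ 2 * m₀) :
    P ^ (1 - ((2 : ℝ) ^ p)⁻¹) *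
      (Q ^ (((2 ^ p * s'' : ℕ) : ℝ) / (4 * κ * m₀)) *
        max (P ^ (1 - ((2 ^ p * (s + 1) : ℕ) : ℝ) / (2 * m₀)) *
              G ^ (((2 ^ p * s' : ℕ) : ℝ)))
            (G ^ ((2 * m₀ : ℝ) + ((2 ^ p * s' : ℕ) : ℝ) -
              ((2 ^ p * (s + 1) : ℕ) : ℝ)))) ^ (((2 : ℝ) ^ p)⁻¹) ≤
      Q ^ ((s'' : ℝ) / (4 * κ * m₀)) *
        max (P ^ (1 - ((s : ℝ) + 1) / (2 * m₀)) * G ^ ((s' : ℝ)))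
            (G ^ ((2 * m₀ : ℝ) + (s' : ℝ) - ((s : ℝ) + 1))) :=
  stmt_9_general P Q G κ hP hQ hG m₀ s s' s'' p hp
end

section
/- Let u : ℕ → ℝ satisfy u(0) = 1, u(2m) ≥ 0 for all m, and |u(2m−1)| ≤ u(2m)^{1 − 1/(2m)} for all m ≥ 1. Let B > 0 be a real number and suppose that u(2m) ≤ u(m)² + B m² u(2m−2) for every m ≥ 1. Then, with C := |u(1)| + 2√B, one has |u(s)| ≤ (C s)^s for every natural number s ≥ 1. -/
set_option maxHeartbeats 1600000 in
/-- Abstract moment recursion (Proposition 3 of the paper): if `u 0 = 1`, even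
terms are nonnegative, `|u(2m-1)| ≤ u(2m)^{1-1/(2m)}`, `B > 0`, and
`u(2m) ≤ u(m)² + B m² u(2m-2)` for all `m ≥ 1`, then with
`C = |u 1| + 2√B` one has `|u s| ≤ (C s)^s` for all `s ≥ 1`. -/
theorem stmt_11 (u : ℕ → ℝ) (h0 : u 0 = 1) (heven : ∀ m : ℕ, 0 ≤ u (2 * m))
    (hodd : ∀ m : ℕ, 1 ≤ m →
      |u (2 * m - 1)| ≤ u (2 * m) ^ (1 - 1 / (2 * (m : ℝ))))
    (B : ℝ) (hB : 0 < B)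
    (hrec : ∀ m : ℕ, 1 ≤ m →
      u (2 * m) ≤ u m ^ 2 + B * (m : ℝ) ^ 2 * u (2 * m - 2)) :
    ∀ s : ℕ, 1 ≤ s → |u s| ≤ ((|u 1| + 2 * Real.sqrt B) * s) ^ s := by
  set C := |u 1| + 2 * Real.sqrt B with hCdef
  have hsB : 0 < Real.sqrt B := Real.sqrt_pos.2 hB
  have hC : 0 < C := by have := abs_nonneg (u 1); simp only [hCdef]; linarith
  have hsq : Real.sqrt B ^ 2 = B := Real.sq_sqrt hB.le
  have hBC : 4 * B ≤ C ^ 2 := by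
    have h1 := abs_nonneg (u 1)
    simp only [hCdef]
    nlinarith [sq_nonneg (|u 1|)]
  have hapos : ∀ m : ℕ, 1 ≤ m → 0 < C * (2 * (m : ℝ) - 1) := by
    intro m hm
    have h1 : (1:ℝ) ≤ (m:ℝ) := by exact_mod_cast hm
    nlinarith
  -- odd bound from even bound
  have hoddC : ∀ m : ℕ, 1 ≤ m →
      u (2 * m) ≤ (C * (2 * (m : ℝ) - 1)) ^ (2 * m) →
      |u (2 * m - 1)| ≤ (C * (2 * (m : ℝ) - 1)) ^ (2 * m - 1) := by
    intro m hm hE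
    have ha := (hapos m hm).le
    have hm1 : (1:ℝ) ≤ (m:ℝ) := by exact_mod_cast hm
    have h2m : (2 * (m:ℝ)) ≠ 0 := by positivity
    have he0 : 0 ≤ 1 - 1 / (2 * (m:ℝ)) := by
      have h : 1 / (2 * (m:ℝ)) ≤ 1 / 2 := by
        apply one_div_le_one_div_of_le <;> linarith
      linarith
    calc |u (2 * m - 1)| ≤ u (2 * m) ^ (1 - 1 / (2 * (m:ℝ))) := hodd m hm
      _ ≤ ((C * (2 * (m:ℝ) - 1)) ^ (2 * m)) ^ (1 - 1 / (2 * (m:ℝ))) :=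
        Real.rpow_le_rpow (heven m) hE he0
      _ = (C * (2 * (m:ℝ) - 1)) ^ (2 * m - 1) := by
        rw [← Real.rpow_natCast (C * (2 * (m:ℝ) - 1)) (2 * m),
            ← Real.rpow_mul ha, ← Real.rpow_natCast (C * (2 * (m:ℝ) - 1)) (2 * m - 1)]
        congr 1
        rw [Nat.cast_sub (by omega : 1 ≤ 2 * m)]
        push_cast
        field_simp
  -- even bound by strong induction
  have E : ∀ m : ℕ, 1 ≤ m → u (2 * m) ≤ (C * (2 * (m:ℝ) - 1)) ^ (2 * m) := by
    intro m
    induction m using Nat.strong_induction_on with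
    | _ m ih =>
      intro hm
      rcases eq_or_lt_of_le hm with h1 | h2
      · obtain rfl : m = 1 := h1.symm
        have hr := hrec 1 le_rfl
        norm_num [h0] at hr ⊢
        simp only [hCdef]
        nlinarith [abs_nonneg (u 1), sq_abs (u 1), hsq, mul_nonneg (abs_nonneg (u 1)) hsB.le]
      · have hm2 : 2 ≤ m := h2
        have hm2' : (2:ℝ) ≤ (m:ℝ) := by exact_mod_cast hm2
        set a := C * (2 * (m:ℝ) - 1) with hadef
        have ha : 0 < a := hapos m hm
        -- bound on |u m|
        have hum : |u m| ≤ (C * (m:ℝ)) ^ m := by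
          rcases Nat.even_or_odd m with ⟨k, hk⟩ | ⟨r, hr⟩
          · have hk1 : 1 ≤ k := by omega
            have hkm : k < m := by omega
            have hE := ih k hkm hk1
            have hak := (hapos k hk1).le
            have h2k : m = 2 * k := by omega
            rw [h2k, abs_of_nonneg (heven k)]
            calc u (2 * k) ≤ (C * (2 * (k:ℝ) - 1)) ^ (2 * k) := hE
              _ ≤ (C * ((2 * k : ℕ) : ℝ)) ^ (2 * k) := by
                apply pow_le_pow_left₀ hak
                push_cast
                nlinarith [hC]
          · have hr1 : 1 ≤ r := by omega
            have hk1 : 1 ≤ r + 1 := by omega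
            have hkm : r + 1 < m := by omega
            have hE := ih (r + 1) hkm hk1
            have h := hoddC (r + 1) hk1 hE
            have hm' : m = 2 * (r + 1) - 1 := by omega
            have hcast : 2 * ((r:ℝ) + 1) - 1 = ((2 * (r + 1) - 1 : ℕ) : ℝ) := by
              rw [Nat.cast_sub (by omega)]; push_cast; ring
            rw [hm']
            push_cast at h
            rwa [hcast] at h
        -- induction hypothesis at m - 1
        have hm1 : 1 ≤ m - 1 := by omega
        have hE' := ih (m - 1) (by omega) hm1
        have hcast1 : ((m - 1 : ℕ) : ℝ) = (m:ℝ) - 1 := by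
          rw [Nat.cast_sub (by omega)]; norm_num
        rw [hcast1] at hE'
        have hbase : (0:ℝ) ≤ C * (2 * ((m:ℝ) - 1) - 1) := by nlinarith [hC]
        have hle : C * (2 * ((m:ℝ) - 1) - 1) ≤ a := by
          simp only [hadef]; nlinarith [hC]
        have hu2 : u (2 * m - 2) ≤ a ^ (2 * m - 2) := by
          have h1 : 2 * m - 2 = 2 * (m - 1) := by omega
          rw [h1]
          calc u (2 * (m - 1)) ≤ (C * (2 * ((m:ℝ) - 1) - 1)) ^ (2 * (m - 1)) := hE'
            _ ≤ a ^ (2 * (m - 1)) := pow_le_pow_left₀ hbase hle _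
        -- term 1
        have hT1 : u m ^ 2 ≤ (16 / 81 : ℝ) * a ^ (2 * m) := by
          have h1 : u m ^ 2 ≤ ((C * (m:ℝ)) ^ m) ^ 2 := by
            rw [← sq_abs (u m)]
            exact pow_le_pow_left₀ (abs_nonneg _) hum 2
          have h2 : ((C * (m:ℝ)) ^ m) ^ 2 = (C * (m:ℝ)) ^ (2 * m) := by
            rw [← pow_mul]; congr 1; omega
          have h3 : C * (m:ℝ) ≤ (2 / 3) * a := by
            simp only [hadef]; nlinarith [hC]
          have h4 : (C * (m:ℝ)) ^ (2 * m) ≤ ((2 / 3) * a) ^ (2 * m) := by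
            apply pow_le_pow_left₀ (by positivity) h3
          have h5 : ((2 / 3 : ℝ)) ^ (2 * m) ≤ (2 / 3 : ℝ) ^ 4 :=
            pow_le_pow_of_le_one (by norm_num) (by norm_num) (by omega)
          have h6 : ((2 / 3 : ℝ) * a) ^ (2 * m) = (2 / 3 : ℝ) ^ (2 * m) * a ^ (2 * m) :=
            mul_pow _ _ _
          have h7 : (0:ℝ) ≤ a ^ (2 * m) := by positivity
          calc u m ^ 2 ≤ (C * (m:ℝ)) ^ (2 * m) := by rw [← h2]; exact h1
            _ ≤ (2 / 3 : ℝ) ^ (2 * m) * a ^ (2 * m) := by rw [← h6]; exact h4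
            _ ≤ (2 / 3 : ℝ) ^ 4 * a ^ (2 * m) := by
                exact mul_le_mul_of_nonneg_right h5 h7
            _ = (16 / 81 : ℝ) * a ^ (2 * m) := by norm_num
        -- term 2
        have hT2 : B * (m:ℝ) ^ 2 * u (2 * m - 2) ≤ (1 / 9 : ℝ) * a ^ (2 * m) := by
          have hBm : B * (m:ℝ) ^ 2 ≤ (1 / 9 : ℝ) * a ^ 2 := by
            simp only [hadef]
            have s1 : (9 / 4 : ℝ) * (m:ℝ) ^ 2 ≤ (2 * (m:ℝ) - 1) ^ 2 := by nlinarith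
            have s2 : (4 * B) * ((9 / 4 : ℝ) * (m:ℝ) ^ 2) ≤ C ^ 2 * ((2 * (m:ℝ) - 1) ^ 2) :=
              mul_le_mul hBC s1 (by positivity) (sq_nonneg C)
            nlinarith [s2]
          have hBm0 : (0:ℝ) ≤ B * (m:ℝ) ^ 2 := by positivity
          have hsplit : a ^ (2 * m) = a ^ 2 * a ^ (2 * m - 2) := by
            rw [← pow_add]; congr 1; omega
          calc B * (m:ℝ) ^ 2 * u (2 * m - 2) ≤ B * (m:ℝ) ^ 2 * a ^ (2 * m - 2) :=
              mul_le_mul_of_nonneg_left hu2 hBm0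
            _ ≤ ((1 / 9 : ℝ) * a ^ 2) * a ^ (2 * m - 2) := by
                apply mul_le_mul_of_nonneg_right hBm (by positivity)
            _ = (1 / 9 : ℝ) * a ^ (2 * m) := by rw [hsplit]; ring
        have hpos : (0:ℝ) ≤ a ^ (2 * m) := by positivity
        calc u (2 * m) ≤ u m ^ 2 + B * (m:ℝ) ^ 2 * u (2 * m - 2) := hrec m (by omega)
          _ ≤ (16 / 81 : ℝ) * a ^ (2 * m) + (1 / 9 : ℝ) * a ^ (2 * m) := by linarith
          _ ≤ a ^ (2 * m) := by linarith
  -- conclusion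
  intro s hs
  rcases Nat.even_or_odd s with ⟨k, hk⟩ | ⟨r, hr⟩
  · have hk1 : 1 ≤ k := by omega
    have hE := E k hk1
    have hak := (hapos k hk1).le
    have h2k : s = 2 * k := by omega
    rw [h2k, abs_of_nonneg (heven k)]
    calc u (2 * k) ≤ (C * (2 * (k:ℝ) - 1)) ^ (2 * k) := hE
      _ ≤ (C * ((2 * k : ℕ) : ℝ)) ^ (2 * k) := by
        apply pow_le_pow_left₀ hak
        push_cast
        nlinarith [hC]
  · have hk1 : 1 ≤ r + 1 := by omega
    have hE := E (r + 1) hk1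
    have h := hoddC (r + 1) hk1 hE
    have hs' : s = 2 * (r + 1) - 1 := by omega
    have hcast : 2 * ((r:ℝ) + 1) - 1 = ((2 * (r + 1) - 1 : ℕ) : ℝ) := by
      rw [Nat.cast_sub (by omega)]; push_cast; ring
    rw [hs']
    push_cast at h
    rwa [hcast] at h
end

section
/- Let v : ℕ → ℝ satisfy v(1) = 0, v(2m) ≥ 0 for all m, and |v(2m−1)| ≤ v(2m)^{1 − 1/(2m)} for all m ≥ 1. Let k ≥ 2 be a natural number, č₁ ≥ 1, μ̄ > 0 and f̄ ≥ 0 real numbers, and set f̄' := max(f̄, μ̄/2). Suppose that for every m ≥ 1, v(2m) ≤ v(m)² + (f̄/μ̄) (č₁ k² m)^k · max( v(2m)^{1 − 1/m}, (č₁ k² m)^{2m − 2} ). Then for every natural number s ≥ 1, |v(s)| ≤ [ (f̄'/μ̄) (č₁ k² s)^k ]^{s/2}. -/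
set_option maxHeartbeats 1000000 in
/-- Abstract momentum-moment recursion (Subtheorem 2 of the paper): if `v 1 = 0`,
even terms are nonnegative, `|v(2m-1)| ≤ v(2m)^{1-1/(2m)}`, `k ≥ 2`, `č₁ ≥ 1`,
`μ̄ > 0`, `f̄ ≥ 0`, and for all `m ≥ 1`
`v(2m) ≤ v(m)² + (f̄/μ̄)(č₁k²m)^k max(v(2m)^{1-1/m}, (č₁k²m)^{2m-2})`,
then with `f̄' = max(f̄, μ̄/2)`, `|v s| ≤ ((f̄'/μ̄)(č₁k²s)^k)^{s/2}` for all `s ≥ 1`. -/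
theorem stmt_12 (v : ℕ → ℝ) (h1 : v 1 = 0) (heven : ∀ m : ℕ, 0 ≤ v (2 * m))
    (hodd : ∀ m : ℕ, 1 ≤ m →
      |v (2 * m - 1)| ≤ v (2 * m) ^ (1 - 1 / (2 * (m : ℝ))))
    (k : ℕ) (hk : 2 ≤ k) (c : ℝ) (hc : 1 ≤ c) (μ : ℝ) (hμ : 0 < μ)
    (f : ℝ) (hf : 0 ≤ f)
    (hrec : ∀ m : ℕ, 1 ≤ m →
      v (2 * m) ≤ v m ^ 2 + f / μ * (c * (k : ℝ) ^ 2 * m) ^ k *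
        max (v (2 * m) ^ (1 - 1 / (m : ℝ))) ((c * (k : ℝ) ^ 2 * m) ^ (2 * m - 2))) :
    ∀ s : ℕ, 1 ≤ s →
      |v s| ≤ (max f (μ / 2) / μ * (c * (k : ℝ) ^ 2 * s) ^ k) ^ ((s : ℝ) / 2) := by
  have hkR : (2:ℝ) ≤ (k:ℝ) := by exact_mod_cast hk
  have hc0 : (0:ℝ) ≤ c := le_trans zero_le_one hc
  set F : ℝ := max f (μ / 2) / μ with hFdef
  have hFhalf : (1:ℝ)/2 ≤ F := by
    rw [hFdef, le_div_iff₀ hμ]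
    have := le_max_right f (μ/2)
    linarith
  have hFpos : (0:ℝ) < F := lt_of_lt_of_le (by norm_num) hFhalf
  have hfF : f / μ ≤ F := by
    rw [hFdef]
    gcongr
    exact le_max_left _ _
  clear_value F
  -- key lemma
  have E : ∀ m : ℕ, 1 ≤ m →
      |v m| ≤ (F * (c * (k:ℝ)^2 * m) ^ k) ^ ((m:ℝ)/2) →
      v (2*m) ≤ (F * (c * (k:ℝ)^2 * (2*(m:ℝ)-1)) ^ k) ^ m := by
    intro m hm1 hvm
    rcases eq_or_lt_of_le hm1 with hm | hm2
    · -- m = 1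
      subst hm
      have h := hrec 1 (le_refl 1)
      simp [h1] at h
      norm_num
      calc v 2 ≤ f/μ * (c * (k:ℝ)^2)^k := h
        _ ≤ F * (c * (k:ℝ)^2)^k := by gcongr
    · -- 2 ≤ m
      have hm2 : 2 ≤ m := hm2
      clear hm1
      have hm1 : 1 ≤ m := le_trans (by norm_num) hm2
      have hm1 : 1 ≤ m := le_trans (by norm_num) hm2
      have hmR : (2:ℝ) ≤ (m:ℝ) := by exact_mod_cast hm2
      have hk4 : (4:ℝ) ≤ (k:ℝ)^2 := by nlinarith
      set P : ℝ := c * (k:ℝ)^2 * m with hPdef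
      set Q : ℝ := c * (k:ℝ)^2 * (2*(m:ℝ)-1) with hQdef
      have hP1 : (1:ℝ) ≤ P := by
        rw [hPdef]
        have h8 : (8:ℝ) ≤ (k:ℝ)^2 * m := by nlinarith
        nlinarith
      have hP0 : (0:ℝ) < P := lt_of_lt_of_le one_pos hP1
      have hQP : (3/2:ℝ) * P ≤ Q := by
        rw [hPdef, hQdef]
        nlinarith [mul_nonneg (mul_nonneg hc0 (sq_nonneg (k:ℝ))) (by linarith : (0:ℝ) ≤ (m:ℝ) - 2)]
      have hQ0 : (0:ℝ) < Q := lt_of_lt_of_le (by linarith) hQP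
      clear_value P Q
      set X : ℝ := (F * P ^ k) ^ m with hXdef
      set Y : ℝ := (F * Q ^ k) ^ m with hYdef
      clear_value X Y
      have hX0 : (0:ℝ) ≤ X := by
        rw [hXdef]; exact pow_nonneg (mul_nonneg hFpos.le (pow_nonneg hP0.le _)) _
      have hY0 : (0:ℝ) < Y := by
        rw [hYdef]; exact pow_pos (mul_pos hFpos (pow_pos hQ0 _)) _
      have hvm2 : v m ^ 2 ≤ X := by
        have h0 : (0:ℝ) ≤ F * P ^ k := mul_nonneg hFpos.le (pow_nonneg hP0.le _)
        calc v m ^ 2 = |v m| ^ 2 := (sq_abs _).symm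
          _ ≤ ((F * P ^ k) ^ ((m:ℝ)/2)) ^ 2 := by
              exact pow_le_pow_left₀ (abs_nonneg _) hvm 2
          _ = X := by
              rw [hXdef, ← Real.rpow_natCast ((F * P ^ k) ^ ((m:ℝ)/2)) 2,
                ← Real.rpow_mul h0, ← Real.rpow_natCast (F * P ^ k) m]
              norm_num
      have h4km : 4 ≤ k * m := Nat.mul_le_mul hk hm2
      have h2km : 2 * m ≤ k * m := Nat.mul_le_mul_right m hk
      have hT : ((3/2:ℝ)) ^ (k * m) * X ≤ Y := by
        have h1 : ((3/2:ℝ)) ^ (k*m) * X = (F * ((3/2)*P) ^ k) ^ m := by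
          rw [hXdef]; ring
        rw [h1, hYdef]
        gcongr (F * ?_ ^ k) ^ m <;> first
        | exact hFpos.le
        | linarith
      have h32 : (5:ℝ) ≤ (3/2:ℝ) ^ (k*m) := by
        calc (5:ℝ) ≤ (3/2:ℝ)^4 := by norm_num
          _ ≤ (3/2:ℝ)^(k*m) := pow_le_pow_right₀ (by norm_num) h4km
      have h2m32 : (2:ℝ)^m ≤ (3/2:ℝ)^(k*m) := by
        calc (2:ℝ)^m ≤ ((9/4:ℝ))^m := pow_le_pow_left₀ (by norm_num) (by norm_num) m
          _ = (3/2:ℝ)^(2*m) := by rw [pow_mul]; norm_num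
          _ ≤ (3/2:ℝ)^(k*m) := pow_le_pow_right₀ (by norm_num) h2km
      have hrm := hrec m hm1
      rw [← hPdef] at hrm
      rcases le_total (v (2*m) ^ (1 - 1/(m:ℝ))) (P ^ (2*m-2)) with hmax | hmax
      · -- case (a)
        rw [max_eq_right hmax] at hrm
        have hFm : F ≤ 2^(m-1) * F^m := by
          have h1 : ((1:ℝ)/2)^(m-1) ≤ F^(m-1) := pow_le_pow_left₀ (by norm_num) hFhalf _
          have h2 : F^m = F * F^(m-1) := by
            conv_lhs => rw [show m = (m-1)+1 by omega]
            rw [pow_succ]; ring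
          have h4 : (2:ℝ)^(m-1) * ((1:ℝ)/2)^(m-1) = 1 := by
            rw [← mul_pow]; norm_num
          calc F = F * (2^(m-1) * ((1:ℝ)/2)^(m-1)) := by rw [h4, mul_one]
            _ ≤ F * (2^(m-1) * F^(m-1)) := by gcongr
            _ = 2^(m-1) * F^m := by rw [h2]; ring
        have hexp : k + (2*m - 2) ≤ k * m := by
          obtain ⟨a, rfl⟩ : ∃ a, m = a + 2 := ⟨m-2, by omega⟩
          obtain ⟨b, rfl⟩ : ∃ b, k = b + 2 := ⟨k-2, by omega⟩
          have h1 : (b+2) + (2*(a+2) - 2) = 2*a + b + 4 := by omega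
          have h2 : (b+2)*(a+2) = a*b + 2*a + 2*b + 4 := by ring
          rw [h1, h2]
          linarith [Nat.zero_le (a*b)]
        have hterm : f / μ * P ^ k * P ^ (2*m-2) ≤ 2^(m-1) * X := by
          calc f / μ * P ^ k * P ^ (2*m-2) ≤ F * P ^ k * P ^ (2*m-2) := by gcongr
            _ = F * P ^ (k + (2*m-2)) := by rw [pow_add]; ring
            _ ≤ (2^(m-1) * F^m) * P ^ (k*m) := by
                apply mul_le_mul hFm (pow_le_pow_right₀ hP1 hexp)
                  (pow_nonneg hP0.le _) (by positivity)
            _ = 2^(m-1) * X := by rw [hXdef]; ring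
        have h1m : (1:ℝ) + 2^(m-1) ≤ 2^m := by
          have h1 : (1:ℝ) ≤ 2^(m-1) := by
            have := pow_le_pow_right₀ (by norm_num : (1:ℝ) ≤ 2) (Nat.zero_le (m-1))
            simpa using this
          have h2 : (2:ℝ)^m = 2^(m-1) * 2 := by
            conv_lhs => rw [show m = (m-1)+1 by omega, pow_succ]
          linarith
        have hsum : (1 + (2:ℝ)^(m-1)) * X ≤ Y := by
          have : (1 + (2:ℝ)^(m-1)) * X ≤ (3/2:ℝ)^(k*m) * X := by
            apply mul_le_mul_of_nonneg_right _ hX0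
            linarith
          linarith
        linarith
      · -- case (b)
        rw [max_eq_left hmax] at hrm
        by_contra hcon
        push_neg at hcon
        have hV0 : (0:ℝ) ≤ v (2*m) := heven m
        have hVpos : (0:ℝ) < v (2*m) := lt_of_le_of_lt hY0.le hcon
        set V := v (2*m) with hVdef
        set W := V ^ ((1:ℝ)/(m:ℝ)) with hWdef
        have hW0 : (0:ℝ) < W := Real.rpow_pos_of_pos hVpos _
        have hVe : V ^ (1 - 1/(m:ℝ)) * W = V := by
          rw [hWdef, ← Real.rpow_add hVpos]
          norm_num
        have h5X : 5 * X ≤ Y := le_trans (mul_le_mul_of_nonneg_right h32 hX0) hT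
        have h45 : (4/5 : ℝ) * V ≤ f / μ * P ^ k * V ^ (1 - 1/(m:ℝ)) := by linarith
        have hWB : (4/5 : ℝ) * W ≤ f / μ * P ^ k := by
          have step : ((4/5:ℝ) * W) * V ≤ (f / μ * P ^ k) * V := by
            calc ((4/5:ℝ) * W) * V = ((4/5:ℝ) * V) * W := by ring
              _ ≤ (f / μ * P ^ k * V ^ (1 - 1/(m:ℝ))) * W :=
                  mul_le_mul_of_nonneg_right h45 hW0.le
              _ = (f / μ * P ^ k) * V := by rw [mul_assoc, hVe]
          exact le_of_mul_le_mul_right step hVpos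
        have hq1 : ((3/2:ℝ)*P)^k ≤ Q^k := pow_le_pow_left₀ (by linarith) hQP k
        have hq2 : (9/4:ℝ) * P^k ≤ ((3/2:ℝ)*P)^k := by
          rw [mul_pow]
          apply mul_le_mul_of_nonneg_right _ (pow_nonneg hP0.le _)
          calc (9/4:ℝ) = (3/2:ℝ)^2 := by norm_num
            _ ≤ (3/2:ℝ)^k := pow_le_pow_right₀ (by norm_num) hk
        have hW : W ≤ F * Q^k := by
          have hB : f / μ * P^k ≤ F * P^k :=
            mul_le_mul_of_nonneg_right hfF (pow_nonneg hP0.le _)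
          have hint1 : F * ((9/4:ℝ) * P^k) ≤ F * Q^k :=
            mul_le_mul_of_nonneg_left (le_trans hq2 hq1) hFpos.le
          have hint2 : (0:ℝ) ≤ F * P^k := mul_nonneg hFpos.le (pow_nonneg hP0.le _)
          nlinarith
        have hWm : W ^ m = V := by
          rw [hWdef, ← Real.rpow_natCast (V ^ ((1:ℝ)/(m:ℝ))) m, ← Real.rpow_mul hV0]
          rw [one_div_mul_cancel (Nat.cast_ne_zero.mpr (by omega) : (m:ℝ) ≠ 0), Real.rpow_one]
        have : V ≤ Y := by
          rw [← hWm, hYdef]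
          exact pow_le_pow_left₀ hW0.le hW m
        linarith
  -- main induction
  have main : ∀ s : ℕ, 1 ≤ s →
      |v s| ≤ (F * (c * (k:ℝ)^2 * s) ^ k) ^ ((s:ℝ)/2) := by
    intro s
    induction s using Nat.strong_induction_on with
    | _ s ih =>
      intro hs
      have hbase : ∀ n : ℕ, (0:ℝ) ≤ c * (k:ℝ)^2 * n := by
        intro n
        have : (0:ℝ) ≤ (n:ℝ) := Nat.cast_nonneg n
        positivity
      rcases Nat.even_or_odd s with ⟨t, ht⟩ | ⟨t, ht⟩
      · -- even: s = t + t
        have ht1 : 1 ≤ t := by omega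
        have h2t : s = 2*t := by omega
        subst h2t
        have ihm := ih t (by omega) ht1
        have hE := E t ht1 ihm
        have ht0 : (1:ℝ) ≤ (t:ℝ) := by exact_mod_cast ht1
        have hb1 : (0:ℝ) ≤ c*(k:ℝ)^2*(2*(t:ℝ)-1) :=
          mul_nonneg (mul_nonneg hc0 (by positivity)) (by linarith)
        have hmono : (F * (c*(k:ℝ)^2*(2*(t:ℝ)-1))^k)^t
            ≤ (F * (c*(k:ℝ)^2*((2*t : ℕ):ℝ))^k)^t := by
          have hcast : ((2*t : ℕ):ℝ) = 2*(t:ℝ) := by push_cast; ring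
          have h2 : (0:ℝ) ≤ c*(k:ℝ)^2 := mul_nonneg hc0 (by positivity)
          have hstep : c*(k:ℝ)^2*(2*(t:ℝ)-1) ≤ c*(k:ℝ)^2*(2*(t:ℝ)) := by nlinarith
          rw [hcast]
          exact pow_le_pow_left₀ (mul_nonneg hFpos.le (pow_nonneg hb1 _))
            (mul_le_mul_of_nonneg_left (pow_le_pow_left₀ hb1 hstep k) hFpos.le) t
        have hrw : (F * (c*(k:ℝ)^2*((2*t : ℕ):ℝ))^k) ^ (((2*t : ℕ):ℝ)/2)
            = (F * (c*(k:ℝ)^2*((2*t : ℕ):ℝ))^k) ^ t := by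
          rw [← Real.rpow_natCast (F * (c*(k:ℝ)^2*((2*t : ℕ):ℝ))^k) t]
          congr 1
          push_cast
          ring
        rw [abs_of_nonneg (heven t), hrw]
        linarith
      · -- odd: s = 2*t + 1
        rcases Nat.eq_or_lt_of_le hs with hs1 | hs2
        · -- s = 1
          rw [← hs1, h1, abs_zero] at *
          have h0 : (0:ℝ) ≤ F * (c*(k:ℝ)^2*((1:ℕ):ℝ))^k :=
            mul_nonneg hFpos.le (pow_nonneg (hbase 1) _)
          exact Real.rpow_nonneg h0 _
        · -- s ≥ 2, odd, so s = 2*m-1 with m = t+1 ≥ 2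
          set m := t + 1 with hmdef
          have ht1 : 1 ≤ t := by omega
          have hm1 : 1 ≤ m := by omega
          have hms : 2*m - 1 = s := by omega
          have h2m : 2*m = s + 1 := by omega
          clear_value m
          have ihm := ih m (by omega) hm1
          have hE := E m hm1 ihm
          have hod := hodd m hm1
          rw [hms] at hod
          have hsreal : (s:ℝ) = 2*(m:ℝ) - 1 := by
            have := congrArg (Nat.cast : ℕ → ℝ) h2m
            push_cast at this
            linarith
          set x : ℝ := F * (c*(k:ℝ)^2*(s:ℝ))^k with hxdef
          have hx0 : (0:ℝ) ≤ x := by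
            rw [hxdef]; exact mul_nonneg hFpos.le (pow_nonneg (hbase s) _)
          have hE' : v (2*m) ≤ x ^ m := by
            rw [hxdef, hsreal]
            exact hE
          have he2 : (0:ℝ) ≤ 1 - 1/(2*(m:ℝ)) := by
            have hmR : (1:ℝ) ≤ (m:ℝ) := by exact_mod_cast hm1
            have : 1/(2*(m:ℝ)) ≤ 1/2 := by
              apply one_div_le_one_div_of_le <;> linarith
            linarith
          calc |v s| ≤ v (2*m) ^ (1 - 1/(2*(m:ℝ))) := hod
            _ ≤ (x ^ m) ^ (1 - 1/(2*(m:ℝ))) :=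
                Real.rpow_le_rpow (heven m) hE' he2
            _ = x ^ ((s:ℝ)/2) := by
                rw [← Real.rpow_natCast x m, ← Real.rpow_mul hx0]
                congr 1
                rw [hsreal]
                have hm0 : (m:ℝ) ≠ 0 := Nat.cast_ne_zero.mpr (by omega)
                field_simp
  exact main
end

section
/- Assume: (i) for all i, i' ∈ ℤ and every R ∈ ℕ, every finite family of finite subsets Z ⊆ ℤ with i ∈ Z, i' ∈ Z and Z ⊆ [−R, R] satisfies Σ a(Z) ≤ ḡ(R) · J̄(|i − i'|); (ii) there are reals η₁, η₂ ≥ 1 such that for p ∈ {1, 2} and all R₀ ∈ ℕ, y₀ ≥ 1 and N ≥ y₀, Σ_{y = y₀}^{N} ḡ(R₀ + y) (y^{p−1} + 1) J̄(y) ≤ η_p · ḡ(R₀ + y₀) (y₀^p + 1) J̄(y₀). Then for all x, y ∈ ℤ with r := y − x ≥ 1, every finite family of finite subsets Z ⊆ ℤ with Z ∩ (−∞, x] ≠ ∅ and Z ∩ [y, ∞) ≠ ∅ satisfies Σ a(Z) ≤ 2 η₁ η₂ · ḡ(|x| + r) · (r² + 1) · J̄(r). -/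
/-!
Classify each set `Z` by the offsets `(s, t)` of its extreme points from the cut: `min Z = x - s`
and `max Z = y + t`. All sets of one class contain the two sites `x - s`, `y + t` at distance
`r + s + t` and lie in `[-(|x| + r + s + t), |x| + r + s + t]`, so hypothesis (i) bounds a class by
`ḡ(|x| + r + s + t) J̄(r + s + t)`. At most `u + 1` classes have `s + t = u`, and
`u + 1 ≤ (r + u) + 1`, so the total is a tail sum of `ḡ(|x| + w)(w + 1)J̄(w)` from `w = r`,
which is at most `η₂ ḡ(|x| + r)(r² + 1)J̄(r)` by (ii) with `p = 2`.
-/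

open Finset

def extremeOffsets (x y : ℤ) (Z : Finset ℤ) : ℕ × ℕ :=
  if h : Z.Nonempty then ((x - Z.min' h).toNat, (Z.max' h - y).toNat) else (0, 0)

lemma extremeOffsets_spec {x y : ℤ} {Z : Finset ℤ} (hx : ∃ i ∈ Z, i ≤ x) (hy : ∃ j ∈ Z, y ≤ j) :
    x - (extremeOffsets x y Z).1 ∈ Z ∧ y + (extremeOffsets x y Z).2 ∈ Z ∧
      Z ⊆ Icc (x - (extremeOffsets x y Z).1) (y + (extremeOffsets x y Z).2) := by
  obtain ⟨i, hiZ, hix⟩ := hx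
  obtain ⟨j, hjZ, hyj⟩ := hy
  have hne : Z.Nonempty := ⟨i, hiZ⟩
  have hmin : Z.min' hne ≤ x := (Z.min'_le i hiZ).trans hix
  have hmax : y ≤ Z.max' hne := hyj.trans (Z.le_max' j hjZ)
  have hlo : x - ((x - Z.min' hne).toNat : ℤ) = Z.min' hne := by omega
  have hhi : y + ((Z.max' hne - y).toNat : ℤ) = Z.max' hne := by omega
  simp only [extremeOffsets, dif_pos hne, hlo, hhi]
  exact ⟨Z.min'_mem hne, Z.max'_mem hne,
    fun z hz => mem_Icc.2 ⟨Z.min'_le z hz, Z.le_max' z hz⟩⟩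

lemma sum_add_le_sum_range_succ_mul {G : ℕ → ℝ} (hG : ∀ u, 0 ≤ G u) {T : Finset (ℕ × ℕ)} {M : ℕ}
    (hT : ∀ p ∈ T, p.1 + p.2 ≤ M) :
    ∑ p ∈ T, G (p.1 + p.2) ≤ ∑ u ∈ range (M + 1), ((u : ℝ) + 1) * G u := by
  classical
  rw [← sum_fiberwise_of_maps_to (g := fun p : ℕ × ℕ => p.1 + p.2) (t := range (M + 1))
    (fun p hp => mem_range.2 (Nat.lt_succ_of_le (hT p hp)))]
  refine sum_le_sum fun u _ => ?_
  have hcard : #(T.filter fun p => p.1 + p.2 = u) ≤ u + 1 := by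
    rw [← Nat.card_antidiagonal u]
    exact card_le_card fun p hp => mem_antidiagonal.2 (mem_filter.1 hp).2
  calc ∑ p ∈ T.filter (fun p => p.1 + p.2 = u), G (p.1 + p.2)
      = #(T.filter fun p => p.1 + p.2 = u) * G u := by
        rw [sum_congr rfl fun p hp => congrArg G (mem_filter.1 hp).2, sum_const, nsmul_eq_mul]
    _ ≤ ((u : ℝ) + 1) * G u := mul_le_mul_of_nonneg_right (by exact_mod_cast hcard) (hG u)

section

variable {a : Finset ℤ → ℝ} {g J : ℕ → ℝ}

lemma sum_le_of_extremeOffsets_eq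
    (hbound : ∀ (i i' : ℤ) (R : ℕ) (F : Finset (Finset ℤ)),
      (∀ Z ∈ F, i ∈ Z ∧ i' ∈ Z ∧ Z ⊆ Icc (-(R : ℤ)) (R : ℤ)) →
      ∑ Z ∈ F, a Z ≤ g R * J (i - i').natAbs)
    (x : ℤ) (r : ℕ) (F : Finset (Finset ℤ))
    (hF : ∀ Z ∈ F, (∃ i ∈ Z, i ≤ x) ∧ (∃ j ∈ Z, x + r ≤ j)) (p : ℕ × ℕ) :
    ∑ Z ∈ F.filter (extremeOffsets x (x + r) · = p), a Z ≤
      g (x.natAbs + r + (p.1 + p.2)) * J (r + (p.1 + p.2)) := by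
  have hdist : (x - p.1 - (x + r + p.2)).natAbs = r + (p.1 + p.2) := by omega
  rw [← hdist]
  refine hbound _ _ _ _ fun Z hZ => ?_
  obtain ⟨hZF, rfl⟩ := mem_filter.1 hZ
  obtain ⟨hlo, hhi, hsub⟩ := extremeOffsets_spec (hF Z hZF).1 (hF Z hZF).2
  exact ⟨hlo, hhi, hsub.trans (Icc_subset_Icc (by omega) (by omega))⟩

lemma sum_le_sum_range_of_crossing
    (hg0 : ∀ r, 0 ≤ g r) (hJ : ∀ r, 0 ≤ J r)
    (hbound : ∀ (i i' : ℤ) (R : ℕ) (F : Finset (Finset ℤ)),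
      (∀ Z ∈ F, i ∈ Z ∧ i' ∈ Z ∧ Z ⊆ Icc (-(R : ℤ)) (R : ℤ)) →
      ∑ Z ∈ F, a Z ≤ g R * J (i - i').natAbs)
    (x : ℤ) (r : ℕ) (F : Finset (Finset ℤ))
    (hF : ∀ Z ∈ F, (∃ i ∈ Z, i ≤ x) ∧ (∃ j ∈ Z, x + r ≤ j)) :
    ∃ M : ℕ, ∑ Z ∈ F, a Z ≤
      ∑ u ∈ range (M + 1), ((u : ℝ) + 1) * (g (x.natAbs + r + u) * J (r + u)) := by
  classical
  set T := F.image (extremeOffsets x (x + r))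
  refine ⟨T.sup fun p => p.1 + p.2, ?_⟩
  calc ∑ Z ∈ F, a Z
      = ∑ p ∈ T, ∑ Z ∈ F.filter (extremeOffsets x (x + r) · = p), a Z :=
        (sum_fiberwise_of_maps_to (fun Z hZ => mem_image_of_mem _ hZ) a).symm
    _ ≤ ∑ p ∈ T, g (x.natAbs + r + (p.1 + p.2)) * J (r + (p.1 + p.2)) :=
        sum_le_sum fun p _ => sum_le_of_extremeOffsets_eq hbound x r F hF p
    _ ≤ _ := sum_add_le_sum_range_succ_mul (fun u => mul_nonneg (hg0 _) (hJ _))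
        fun p hp => le_sup (f := fun p : ℕ × ℕ => p.1 + p.2) hp

lemma sum_range_le_of_tail_bound (hg0 : ∀ r, 0 ≤ g r) (hJ : ∀ r, 0 ≤ J r) {η : ℝ}
    (htail : ∀ (R₀ y₀ N : ℕ), 1 ≤ y₀ → y₀ ≤ N →
      ∑ y ∈ Icc y₀ N, g (R₀ + y) * ((y : ℝ) ^ 1 + 1) * J y ≤
        η * (g (R₀ + y₀) * ((y₀ : ℝ) ^ 2 + 1) * J y₀))
    (R₀ : ℕ) {r : ℕ} (hr : 1 ≤ r) (M : ℕ) :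
    ∑ u ∈ range (M + 1), ((u : ℝ) + 1) * (g (R₀ + r + u) * J (r + u)) ≤
      η * (g (R₀ + r) * ((r : ℝ) ^ 2 + 1) * J r) := by
  calc ∑ u ∈ range (M + 1), ((u : ℝ) + 1) * (g (R₀ + r + u) * J (r + u))
      ≤ ∑ u ∈ range (M + 1), g (R₀ + (r + u)) * (((r + u : ℕ) : ℝ) ^ 1 + 1) * J (r + u) := by
        refine sum_le_sum fun u _ => ?_
        rw [← add_assoc, pow_one, Nat.cast_add]
        have hGJ := mul_nonneg (hg0 (R₀ + r + u)) (hJ (r + u))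
        nlinarith [mul_nonneg (Nat.cast_nonneg r : (0 : ℝ) ≤ r) hGJ]
    _ = ∑ w ∈ Icc r (r + M), g (R₀ + w) * ((w : ℝ) ^ 1 + 1) * J w := by
        rw [← Ico_add_one_right_eq_Icc, sum_Ico_eq_sum_range, show r + M + 1 - r = M + 1 by omega]
    _ ≤ _ := htail R₀ r (r + M) hr (Nat.le_add_right r M)

end

theorem stmt_13_general (a : Finset ℤ → ℝ)
    (g J : ℕ → ℝ) (hg0 : ∀ r, 0 ≤ g r) (hJ : ∀ r, 0 ≤ J r)
    (hbound : ∀ (i i' : ℤ) (R : ℕ) (F : Finset (Finset ℤ)),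
      (∀ Z ∈ F, i ∈ Z ∧ i' ∈ Z ∧ Z ⊆ Finset.Icc (-(R : ℤ)) (R : ℤ)) →
      ∑ Z ∈ F, a Z ≤ g R * J (i - i').natAbs)
    (η₁ η₂ : ℝ) (hη₁ : 1 ≤ η₁) (hη₂ : 1 ≤ η₂)
    (hsum2 : ∀ (R₀ y₀ N : ℕ), 1 ≤ y₀ → y₀ ≤ N →
      ∑ y ∈ Finset.Icc y₀ N, g (R₀ + y) * ((y : ℝ) ^ 1 + 1) * J y ≤
        η₂ * (g (R₀ + y₀) * ((y₀ : ℝ) ^ 2 + 1) * J y₀)) :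
    ∀ (x y : ℤ), 1 ≤ y - x →
      ∀ F : Finset (Finset ℤ),
        (∀ Z ∈ F, (∃ i ∈ Z, i ≤ x) ∧ (∃ j ∈ Z, y ≤ j)) →
        ∑ Z ∈ F, a Z ≤
          2 * η₁ * η₂ * g (x.natAbs + (y - x).toNat) *
            (((y - x : ℤ) : ℝ) ^ 2 + 1) * J (y - x).toNat := by
  intro x y hxy F hF
  obtain ⟨r, rfl⟩ : ∃ r : ℕ, y = x + r := ⟨(y - x).toNat, by omega⟩
  have hr : 1 ≤ r := by omega
  simp only [add_sub_cancel_left, Int.toNat_natCast, Int.cast_natCast]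
  obtain ⟨M, hM⟩ := sum_le_sum_range_of_crossing hg0 hJ hbound x r F hF
  have hX : 0 ≤ g (x.natAbs + r) * ((r : ℝ) ^ 2 + 1) * J r :=
    mul_nonneg (mul_nonneg (hg0 _) (by positivity)) (hJ r)
  calc ∑ Z ∈ F, a Z ≤ η₂ * (g (x.natAbs + r) * ((r : ℝ) ^ 2 + 1) * J r) :=
        hM.trans (sum_range_le_of_tail_bound hg0 hJ hsum2 x.natAbs hr M)
    _ ≤ 2 * η₁ * η₂ * g (x.natAbs + r) * ((r : ℝ) ^ 2 + 1) * J r := by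
        nlinarith [mul_nonneg hX (by linarith : (0 : ℝ) ≤ η₂)]

/-- Block–block interaction bound (Lemma 17 of the paper): for interaction norms
`a(Z) ≥ 0` on finite subsets of ℤ, a nonnegative monotone local-energy scale `ḡ`,
and a nonnegative decay profile `J̄`, assume
(i) every finite family of sets `Z` containing both `i` and `i'` and contained in
`[-R, R]` has total weight at most `ḡ(R) J̄(|i - i'|)`; and
(ii) `η₁, η₂ ≥ 1` are tail constants for `∑_y ḡ(R₀+y)(y^{p-1}+1)J̄(y)`, `p = 1, 2`.
Then for `x, y ∈ ℤ` with `r = y - x ≥ 1`, every finite family of sets meeting both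
`(-∞, x]` and `[y, ∞)` has total weight at most
`2 η₁ η₂ ḡ(|x| + r)(r² + 1) J̄(r)`. -/
theorem stmt_13 (a : Finset ℤ → ℝ) (ha : ∀ Z, 0 ≤ a Z)
    (g J : ℕ → ℝ) (hg0 : ∀ r, 0 ≤ g r) (hgmono : Monotone g) (hJ : ∀ r, 0 ≤ J r)
    (hbound : ∀ (i i' : ℤ) (R : ℕ) (F : Finset (Finset ℤ)),
      (∀ Z ∈ F, i ∈ Z ∧ i' ∈ Z ∧ Z ⊆ Finset.Icc (-(R : ℤ)) (R : ℤ)) →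
      ∑ Z ∈ F, a Z ≤ g R * J (i - i').natAbs)
    (η₁ η₂ : ℝ) (hη₁ : 1 ≤ η₁) (hη₂ : 1 ≤ η₂)
    (hsum1 : ∀ (R₀ y₀ N : ℕ), 1 ≤ y₀ → y₀ ≤ N →
      ∑ y ∈ Finset.Icc y₀ N, g (R₀ + y) * ((y : ℝ) ^ 0 + 1) * J y ≤
        η₁ * (g (R₀ + y₀) * ((y₀ : ℝ) ^ 1 + 1) * J y₀))
    (hsum2 : ∀ (R₀ y₀ N : ℕ), 1 ≤ y₀ → y₀ ≤ N →
      ∑ y ∈ Finset.Icc y₀ N, g (R₀ + y) * ((y : ℝ) ^ 1 + 1) * J y ≤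
        η₂ * (g (R₀ + y₀) * ((y₀ : ℝ) ^ 2 + 1) * J y₀)) :
    ∀ (x y : ℤ), 1 ≤ y - x →
      ∀ F : Finset (Finset ℤ),
        (∀ Z ∈ F, (∃ i ∈ Z, i ≤ x) ∧ (∃ j ∈ Z, y ≤ j)) →
        ∑ Z ∈ F, a Z ≤
          2 * η₁ * η₂ * g (x.natAbs + (y - x).toNat) *
            (((y - x : ℤ) : ℝ) ^ 2 + 1) * J (y - x).toNat :=
  stmt_13_general a g J hg0 hJ hbound η₁ η₂ hη₁ hη₂ hsum2
end

section
/- Assume ε_Ω ≤ 1/2 and 2ε_H < Δ, and let Ω̃ be a ground state of the effective Hamiltonian PHP. Then there exists a complex number c with |c| = 1 such that ‖Ω − c·Ω̃‖ ≤ √(2ε_Ω) + √(2 ε_H Δ) / (Δ − 2 ε_H). -/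
/-!
Decompose the ground state `Ω̃` of `PHP` along `Ω` and its orthogonal complement. Since
`HΩ = 0`, the energy of `Ω̃` is the energy of its component orthogonal to `Ω`, so the gap gives
`Δ (1 - |⟪Ω, Ω̃⟫|²) ≤ ⟪Ω̃, HΩ̃⟫`. Testing the variational principle for `PHP` with the normalized
`PΩ` bounds that energy by `ε_H`. Aligning the phase of `Ω̃` with `Ω` makes
`‖Ω - cΩ̃‖² = 2 - 2|⟪Ω, Ω̃⟫| ≤ 2 (1 - |⟪Ω, Ω̃⟫|²) ≤ 2ε_H/Δ`, and
`√(2ε_H/Δ) ≤ √(2ε_H Δ)/(Δ - 2ε_H)`.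
-/

open RCLike
open scoped InnerProductSpace

section

variable {𝕜 E : Type*} [RCLike 𝕜] [NormedAddCommGroup E] [InnerProductSpace 𝕜 E]

theorem norm_sub_inner_smul_sq {Ω : E} (hΩ : ‖Ω‖ = 1) (χ : E) :
    ‖χ - ⟪Ω, χ⟫_𝕜 • Ω‖ ^ 2 = ‖χ‖ ^ 2 - ‖⟪Ω, χ⟫_𝕜‖ ^ 2 := by
  rw [norm_sub_sq (𝕜 := 𝕜), inner_smul_right, ← inner_conj_symm χ Ω, mul_conj, norm_smul, hΩ]
  simp only [← ofReal_pow, ofReal_re]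
  ring

theorem exists_norm_eq_one_norm_sub_smul_sq {u v : E} (hu : ‖u‖ = 1) (hv : ‖v‖ = 1) :
    ∃ c : 𝕜, ‖c‖ = 1 ∧ ‖u - c • v‖ ^ 2 = 2 - 2 * ‖⟪u, v⟫_𝕜‖ := by
  obtain ⟨c, hc, hcuv⟩ := exists_norm_eq_mul_self ⟪u, v⟫_𝕜
  refine ⟨c, hc, ?_⟩
  rw [norm_sub_sq (𝕜 := 𝕜), inner_smul_right, ← hcuv, ofReal_re, norm_smul, hc, hu, hv]
  ring

variable (H : E →L[𝕜] E)

theorem mul_norm_sq_sub_norm_inner_sq_le_re_inner_apply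
    (hH : (H : E →ₗ[𝕜] E).IsSymmetric) {Ω : E} (hΩ : ‖Ω‖ = 1) (hHΩ : H Ω = 0) {Δ : ℝ}
    (hgap : ∀ ψ : E, ⟪Ω, ψ⟫_𝕜 = 0 → Δ * ‖ψ‖ ^ 2 ≤ re ⟪ψ, H ψ⟫_𝕜) (χ : E) :
    Δ * (‖χ‖ ^ 2 - ‖⟪Ω, χ⟫_𝕜‖ ^ 2) ≤ re ⟪χ, H χ⟫_𝕜 := by
  set ψ := χ - ⟪Ω, χ⟫_𝕜 • Ω
  have hΩψ : ⟪Ω, ψ⟫_𝕜 = 0 := by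
    simp [ψ, inner_sub_right, inner_smul_right, inner_self_eq_norm_sq_to_K, hΩ]
  have hΩHχ : ⟪Ω, H χ⟫_𝕜 = 0 := by simpa [hHΩ] using (hH Ω χ).symm
  have hHψ : ⟪ψ, H ψ⟫_𝕜 = ⟪χ, H χ⟫_𝕜 := by
    simp [ψ, hHΩ, inner_sub_left, inner_smul_left, hΩHχ]
  rw [← norm_sub_inner_smul_sq hΩ, ← hHψ]
  exact hgap ψ hΩψ

theorem re_inner_apply_le_div_norm_sq {P : E →L[𝕜] E} {Ω' φ : E}
    (hmin : ∀ ψ : E, ‖ψ‖ = 1 → P ψ = ψ → re ⟪Ω', H Ω'⟫_𝕜 ≤ re ⟪ψ, H ψ⟫_𝕜)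
    (hφ : φ ≠ 0) (hPφ : P φ = φ) :
    re ⟪Ω', H Ω'⟫_𝕜 ≤ re ⟪φ, H φ⟫_𝕜 / ‖φ‖ ^ 2 := by
  have hφpos : 0 < ‖φ‖ := norm_pos_iff.mpr hφ
  set r : 𝕜 := ((‖φ‖⁻¹ : ℝ) : 𝕜)
  have hr : ‖r • φ‖ = 1 := by
    rw [norm_smul, norm_ofReal, abs_inv, abs_norm, inv_mul_cancel₀ hφpos.ne']
  have hPr : P (r • φ) = r • φ := by rw [map_smul, hPφ]
  refine (hmin _ hr hPr).trans_eq ?_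
  rw [map_smul, inner_smul_left, inner_smul_right, conj_ofReal, ← mul_assoc, ← ofReal_mul,
    re_ofReal_mul]
  field_simp

theorem exists_norm_eq_one_mul_norm_sub_smul_sq_le
    (hH : (H : E →ₗ[𝕜] E).IsSymmetric) {Ω : E} (hΩ : ‖Ω‖ = 1) (hHΩ : H Ω = 0) {Δ : ℝ}
    (hΔ : 0 ≤ Δ) (hgap : ∀ ψ : E, ⟪Ω, ψ⟫_𝕜 = 0 → Δ * ‖ψ‖ ^ 2 ≤ re ⟪ψ, H ψ⟫_𝕜)
    {Ω' : E} (hΩ' : ‖Ω'‖ = 1) :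
    ∃ c : 𝕜, ‖c‖ = 1 ∧ Δ * ‖Ω - c • Ω'‖ ^ 2 ≤ 2 * re ⟪Ω', H Ω'⟫_𝕜 := by
  obtain ⟨c, hc, hdist⟩ := exists_norm_eq_one_norm_sub_smul_sq (𝕜 := 𝕜) hΩ hΩ'
  refine ⟨c, hc, ?_⟩
  set t := ‖⟪Ω, Ω'⟫_𝕜‖
  have hoverlap : Δ * (1 - t ^ 2) ≤ re ⟪Ω', H Ω'⟫_𝕜 := by
    simpa [hΩ'] using mul_norm_sq_sub_norm_inner_sq_le_re_inner_apply H hH hΩ hHΩ hgap Ω'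
  have ht : t ≤ 1 := by simpa [hΩ, hΩ'] using norm_inner_le_norm (𝕜 := 𝕜) Ω Ω'
  have ht₀ : 0 ≤ t := norm_nonneg _
  rw [hdist]
  calc Δ * (2 - 2 * t) ≤ 2 * (Δ * (1 - t ^ 2)) := by nlinarith [mul_nonneg ht₀ (sub_nonneg.2 ht)]
    _ ≤ 2 * re ⟪Ω', H Ω'⟫_𝕜 := by linarith

end

theorem sqrt_div_le_sqrt_mul_div_sub {e Δ : ℝ} (hΔ : 0 < Δ) (he : 2 * e < Δ) :
    √(2 * e / Δ) ≤ √(2 * e * Δ) / (Δ - 2 * e) := by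
  rcases le_or_gt e 0 with he₀ | he₀
  · rw [Real.sqrt_eq_zero'.2 (div_nonpos_of_nonpos_of_nonneg (by linarith) hΔ.le)]
    positivity
  have hsqrt : √(2 * e / Δ) = √(2 * e * Δ) / Δ := by
    rw [show 2 * e / Δ = 2 * e * Δ / Δ ^ 2 by field_simp, Real.sqrt_div' _ (by positivity),
      Real.sqrt_sq hΔ.le]
  rw [hsqrt]
  exact div_le_div_of_nonneg_left (Real.sqrt_nonneg _) (by linarith) (by linarith)

theorem stmt_14_general {E : Type*} [NormedAddCommGroup E] [InnerProductSpace ℂ E]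
    (H : E →L[ℂ] E) (hHsa : ∀ ψ χ : E, (inner ℂ (H ψ) χ : ℂ) = inner ℂ ψ (H χ))
    (Ω : E) (hΩnorm : ‖Ω‖ = 1) (hHΩ : H Ω = 0)
    (Δ : ℝ) (hΔ : 0 < Δ)
    (hgap : ∀ ψ : E, (inner ℂ Ω ψ : ℂ) = 0 →
      Δ * ‖ψ‖ ^ 2 ≤ ((inner ℂ ψ (H ψ) : ℂ)).re)
    (P : E →L[ℂ] E)
    (hPidem : ∀ ψ : E, P (P ψ) = P ψ) (hPΩ : P Ω ≠ 0)
    (hεH : 2 * (((inner ℂ (P Ω) (H (P Ω)) : ℂ)).re / ‖P Ω‖ ^ 2) < Δ)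
    (Ω' : E) (hΩ'norm : ‖Ω'‖ = 1)
    (hΩ'gs : ∀ ψ : E, ‖ψ‖ = 1 → P ψ = ψ →
      ((inner ℂ Ω' (H Ω') : ℂ)).re ≤ ((inner ℂ ψ (H ψ) : ℂ)).re) :
    ∃ c : ℂ, ‖c‖ = 1 ∧
      ‖Ω - c • Ω'‖ ≤
        Real.sqrt (2 * (1 - ‖P Ω‖ ^ 2)) +
          Real.sqrt (2 * (((inner ℂ (P Ω) (H (P Ω)) : ℂ)).re / ‖P Ω‖ ^ 2) * Δ) /
            (Δ - 2 * (((inner ℂ (P Ω) (H (P Ω)) : ℂ)).re / ‖P Ω‖ ^ 2)) := by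
  set εH := ((inner ℂ (P Ω) (H (P Ω)) : ℂ)).re / ‖P Ω‖ ^ 2
  obtain ⟨c, hc, hclose⟩ :=
    exists_norm_eq_one_mul_norm_sub_smul_sq_le H hHsa hΩnorm hHΩ hΔ.le hgap hΩ'norm
  have henergy : ((inner ℂ Ω' (H Ω') : ℂ)).re ≤ εH :=
    re_inner_apply_le_div_norm_sq H hΩ'gs hPΩ (hPidem Ω)
  have hsq : ‖Ω - c • Ω'‖ ^ 2 ≤ 2 * εH / Δ := by
    rw [RCLike.re_to_complex] at hclose
    rw [le_div_iff₀ hΔ]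
    linarith
  refine ⟨c, hc, ?_⟩
  calc ‖Ω - c • Ω'‖ ≤ √(2 * εH / Δ) := Real.le_sqrt_of_sq_le hsq
    _ ≤ √(2 * εH * Δ) / (Δ - 2 * εH) := sqrt_div_le_sqrt_mul_div_sub hΔ hεH
    _ ≤ _ := le_add_of_nonneg_left (Real.sqrt_nonneg _)

/-- Ground-state preservation under projection (Lemma 15 of the paper): let `H` be
a bounded self-adjoint operator on a complex Hilbert space with ground state `Ω`
(`HΩ = 0`, `‖Ω‖ = 1`) and spectral gap `Δ > 0`, and let `P` be an orthogonal
projection with `PΩ ≠ 0`. Set `ε_Ω = 1 - ‖PΩ‖²`, `ε_H = Re⟪PΩ, H(PΩ)⟫/‖PΩ‖²`.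
If `ε_Ω ≤ 1/2` and `2ε_H < Δ`, any ground state `Ω̃` of `PHP` satisfies
`‖Ω - c Ω̃‖ ≤ √(2ε_Ω) + √(2ε_H Δ)/(Δ - 2ε_H)` for some unimodular `c ∈ ℂ`. -/
theorem stmt_14 {E : Type*} [NormedAddCommGroup E] [InnerProductSpace ℂ E]
    [CompleteSpace E]
    (H : E →L[ℂ] E) (hHsa : ∀ ψ χ : E, (inner ℂ (H ψ) χ : ℂ) = inner ℂ ψ (H χ))
    (Ω : E) (hΩnorm : ‖Ω‖ = 1) (hHΩ : H Ω = 0)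
    (Δ : ℝ) (hΔ : 0 < Δ)
    (hgap : ∀ ψ : E, (inner ℂ Ω ψ : ℂ) = 0 →
      Δ * ‖ψ‖ ^ 2 ≤ ((inner ℂ ψ (H ψ) : ℂ)).re)
    (P : E →L[ℂ] E) (hPsa : ∀ ψ χ : E, (inner ℂ (P ψ) χ : ℂ) = inner ℂ ψ (P χ))
    (hPidem : ∀ ψ : E, P (P ψ) = P ψ) (hPΩ : P Ω ≠ 0)
    (hεΩ : 1 - ‖P Ω‖ ^ 2 ≤ 1 / 2)
    (hεH : 2 * (((inner ℂ (P Ω) (H (P Ω)) : ℂ)).re / ‖P Ω‖ ^ 2) < Δ)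
    (Ω' : E) (hΩ'norm : ‖Ω'‖ = 1) (hΩ'P : P Ω' = Ω')
    (hΩ'gs : ∀ ψ : E, ‖ψ‖ = 1 → P ψ = ψ →
      ((inner ℂ Ω' (H Ω') : ℂ)).re ≤ ((inner ℂ ψ (H ψ) : ℂ)).re) :
    ∃ c : ℂ, ‖c‖ = 1 ∧
      ‖Ω - c • Ω'‖ ≤
        Real.sqrt (2 * (1 - ‖P Ω‖ ^ 2)) +
          Real.sqrt (2 * (((inner ℂ (P Ω) (H (P Ω)) : ℂ)).re / ‖P Ω‖ ^ 2) * Δ) /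
            (Δ - 2 * (((inner ℂ (P Ω) (H (P Ω)) : ℂ)).re / ‖P Ω‖ ^ 2)) :=
  stmt_14_general H hHsa Ω hΩnorm hHΩ Δ hΔ hgap P hPidem hPΩ hεH Ω' hΩ'norm hΩ'gs
end

section
/- Assume ε_Ω ≤ 1/2 and let Ω̃ be a ground state of the effective Hamiltonian PHP. Then for every unit vector ψ with Pψ = ψ and ⟪Ω̃, ψ⟫ = 0, one has Re⟪ψ, Hψ⟫ − Re⟪Ω̃, HΩ̃⟫ ≥ (1 − ε_Ω) Δ − 2 ε_H; that is, the spectral gap of the effective Hamiltonian is at least (1 − ε_Ω)Δ − 2ε_H. -/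
/-!
The gap hypothesis gives `Δ (‖φ‖² - ‖⟪Ω, φ⟫‖²) ≤ Re⟪φ, Hφ⟫` for every `φ`, so energies are
bounded below by the weight off `Ω`. With `b = ⟪Ω, Ω̃⟫` and `a = ⟪Ω, ψ⟫`, Bessel's inequality for
the orthonormal pair `Ω̃, ψ` in the range of `P` gives `‖a‖² + ‖b‖² ≤ ‖PΩ‖²`, and testing the
ground-state property on `PΩ / ‖PΩ‖` gives `Δ (1 - ‖b‖²) ≤ Re⟪Ω̃, HΩ̃⟫ ≤ ε_H`. Hence
`Re⟪ψ, Hψ⟫ - Re⟪Ω̃, HΩ̃⟫ ≥ Δ (1 - ‖PΩ‖² + ‖b‖²) - ε_H ≥ Δ (2 - ‖PΩ‖²) - 2 ε_H`,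
which suffices because `‖PΩ‖ ≤ ‖Ω‖ = 1`.
-/

section

open RCLike
open scoped InnerProductSpace

variable {𝕜 E : Type*} [RCLike 𝕜] [NormedAddCommGroup E] [InnerProductSpace 𝕜 E]

theorem norm_sub_inner_smul_sq_s15 {u : E} (hu : ‖u‖ = 1) (x : E) :
    ‖x - ⟪u, x⟫_𝕜 • u‖ ^ 2 = ‖x‖ ^ 2 - ‖⟪u, x⟫_𝕜‖ ^ 2 := by
  rw [@norm_sub_sq 𝕜, inner_smul_right, mul_comm, inner_mul_symm_re_eq_norm, norm_mul,
    norm_inner_symm x u, norm_smul, hu]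
  ring

theorem norm_inner_sq_add_norm_inner_sq_le {u v : E} (hu : ‖u‖ = 1) (hv : ‖v‖ = 1)
    (huv : ⟪u, v⟫_𝕜 = 0) (x : E) : ‖⟪u, x⟫_𝕜‖ ^ 2 + ‖⟪v, x⟫_𝕜‖ ^ 2 ≤ ‖x‖ ^ 2 := by
  have hon : Orthonormal 𝕜 ![u, v] := by simp [orthonormal_vecCons_iff, hu, hv, huv]
  simpa [Fin.sum_univ_two] using hon.sum_inner_products_le x (s := Finset.univ)

namespace LinearMap

theorem IsSymmetricProjection.norm_apply_le {P : E →ₗ[𝕜] E} (hP : P.IsSymmetricProjection)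
    (x : E) : ‖P x‖ ≤ ‖x‖ := by
  have hsq : ‖P x‖ ^ 2 ≤ ‖x‖ * ‖P x‖ := by
    rw [← inner_self_eq_norm_sq (𝕜 := 𝕜), hP.isSymmetric, ← Module.End.mul_apply,
      hP.isIdempotentElem.eq]
    exact re_inner_le_norm x (P x)
  nlinarith [norm_nonneg x, norm_nonneg (P x)]

theorem re_inner_smul_inv_norm_apply_smul_inv_norm (T : E →ₗ[𝕜] E) (x : E) :
    re ⟪(‖x‖⁻¹ : 𝕜) • x, T ((‖x‖⁻¹ : 𝕜) • x)⟫_𝕜 = re ⟪x, T x⟫_𝕜 / ‖x‖ ^ 2 := by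
  rw [map_smul, inner_smul_left, inner_smul_right, map_inv₀, conj_ofReal, ← mul_assoc,
    ← ofReal_inv, ← ofReal_mul, re_ofReal_mul, ← mul_inv, ← sq, inv_mul_eq_div]

theorem IsSymmetric.mul_sub_norm_inner_sq_le {T : E →ₗ[𝕜] E} (hT : T.IsSymmetric) {Ω : E}
    (hΩ : ‖Ω‖ = 1) (hTΩ : T Ω = 0) {Δ : ℝ}
    (hgap : ∀ ψ, ⟪Ω, ψ⟫_𝕜 = 0 → Δ * ‖ψ‖ ^ 2 ≤ re ⟪ψ, T ψ⟫_𝕜) (φ : E) :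
    Δ * (‖φ‖ ^ 2 - ‖⟪Ω, φ⟫_𝕜‖ ^ 2) ≤ re ⟪φ, T φ⟫_𝕜 := by
  have horth : ⟪Ω, φ - ⟪Ω, φ⟫_𝕜 • Ω⟫_𝕜 = 0 := by
    rw [inner_sub_right, inner_smul_right, inner_self_eq_norm_sq_to_K, hΩ]
    simp
  have hTφ : T (φ - ⟪Ω, φ⟫_𝕜 • Ω) = T φ := by simp [hTΩ]
  have henergy : ⟪φ - ⟪Ω, φ⟫_𝕜 • Ω, T φ⟫_𝕜 = ⟪φ, T φ⟫_𝕜 := by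
    rw [inner_sub_left, inner_smul_left, ← hT Ω φ, hTΩ, inner_zero_left, mul_zero, sub_zero]
  simpa [norm_sub_inner_smul_sq_s15 hΩ, hTφ, henergy] using hgap _ horth

end LinearMap

end

theorem stmt_15_general {E : Type*} [NormedAddCommGroup E] [InnerProductSpace ℂ E]
    (H : E →L[ℂ] E) (hHsa : ∀ ψ χ : E, (inner ℂ (H ψ) χ : ℂ) = inner ℂ ψ (H χ))
    (Ω : E) (hΩnorm : ‖Ω‖ = 1) (hHΩ : H Ω = 0)
    (Δ : ℝ) (hΔ : 0 < Δ)
    (hgap : ∀ ψ : E, (inner ℂ Ω ψ : ℂ) = 0 →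
      Δ * ‖ψ‖ ^ 2 ≤ ((inner ℂ ψ (H ψ) : ℂ)).re)
    (P : E →L[ℂ] E) (hPsa : ∀ ψ χ : E, (inner ℂ (P ψ) χ : ℂ) = inner ℂ ψ (P χ))
    (hPidem : ∀ ψ : E, P (P ψ) = P ψ) (hPΩ : P Ω ≠ 0)
    (Ω' : E) (hΩ'norm : ‖Ω'‖ = 1) (hΩ'P : P Ω' = Ω')
    (hΩ'gs : ∀ ψ : E, ‖ψ‖ = 1 → P ψ = ψ →
      ((inner ℂ Ω' (H Ω') : ℂ)).re ≤ ((inner ℂ ψ (H ψ) : ℂ)).re) :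
    ∀ ψ : E, ‖ψ‖ = 1 → P ψ = ψ → (inner ℂ Ω' ψ : ℂ) = 0 →
      (1 - (1 - ‖P Ω‖ ^ 2)) * Δ -
          2 * (((inner ℂ (P Ω) (H (P Ω)) : ℂ)).re / ‖P Ω‖ ^ 2) ≤
        ((inner ℂ ψ (H ψ) : ℂ)).re - ((inner ℂ Ω' (H Ω') : ℂ)).re := by
  intro ψ hψnorm hψP hψΩ'
  have hPproj : (P : E →ₗ[ℂ] E).IsSymmetricProjection := ⟨LinearMap.ext hPidem, hPsa⟩
  have hHsymm : (H : E →ₗ[ℂ] E).IsSymmetric := hHsa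
  have hPΩle : ‖P Ω‖ ≤ 1 := hΩnorm ▸ hPproj.norm_apply_le Ω
  have hvar : (inner ℂ Ω' (H Ω')).re ≤ (inner ℂ (P Ω) (H (P Ω))).re / ‖P Ω‖ ^ 2 :=
    (hΩ'gs _ (norm_smul_inv_norm hPΩ) (by rw [map_smul, hPidem])).trans_eq
      ((H : E →ₗ[ℂ] E).re_inner_smul_inv_norm_apply_smul_inv_norm (P Ω))
  have hbessel : ‖inner ℂ Ω Ω'‖ ^ 2 + ‖inner ℂ Ω ψ‖ ^ 2 ≤ ‖P Ω‖ ^ 2 := by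
    have := norm_inner_sq_add_norm_inner_sq_le hΩ'norm hψnorm hψΩ' (P Ω)
    rwa [← hPsa, ← hPsa, hΩ'P, hψP, norm_inner_symm Ω', norm_inner_symm ψ] at this
  have hgapΩ' : Δ * (1 - ‖inner ℂ Ω Ω'‖ ^ 2) ≤ (inner ℂ Ω' (H Ω')).re := by
    simpa [hΩ'norm] using hHsymm.mul_sub_norm_inner_sq_le hΩnorm hHΩ hgap Ω'
  have hgapψ : Δ * (1 - ‖inner ℂ Ω ψ‖ ^ 2) ≤ (inner ℂ ψ (H ψ)).re := by
    simpa [hψnorm] using hHsymm.mul_sub_norm_inner_sq_le hΩnorm hHΩ hgap ψ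
  have hPΩsq : ‖P Ω‖ ^ 2 ≤ 1 := pow_le_one₀ (norm_nonneg _) hPΩle
  linarith [mul_le_mul_of_nonneg_left hbessel hΔ.le, mul_le_mul_of_nonneg_left hPΩsq hΔ.le]

/-- Spectral-gap preservation under projection (Lemma 15 of the paper): let `H` be
a bounded self-adjoint operator on a complex Hilbert space with ground state `Ω`
(`HΩ = 0`, `‖Ω‖ = 1`) and spectral gap `Δ > 0`, and let `P` be an orthogonal
projection with `PΩ ≠ 0`. Set `ε_Ω = 1 - ‖PΩ‖²`, `ε_H = Re⟪PΩ, H(PΩ)⟫/‖PΩ‖²`.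
If `ε_Ω ≤ 1/2`, then for any ground state `Ω̃` of `PHP` and any unit vector `ψ`
in the range of `P` orthogonal to `Ω̃`,
`Re⟪ψ, Hψ⟫ - Re⟪Ω̃, HΩ̃⟫ ≥ (1 - ε_Ω)Δ - 2ε_H`. -/
theorem stmt_15 {E : Type*} [NormedAddCommGroup E] [InnerProductSpace ℂ E]
    [CompleteSpace E]
    (H : E →L[ℂ] E) (hHsa : ∀ ψ χ : E, (inner ℂ (H ψ) χ : ℂ) = inner ℂ ψ (H χ))
    (Ω : E) (hΩnorm : ‖Ω‖ = 1) (hHΩ : H Ω = 0)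
    (Δ : ℝ) (hΔ : 0 < Δ)
    (hgap : ∀ ψ : E, (inner ℂ Ω ψ : ℂ) = 0 →
      Δ * ‖ψ‖ ^ 2 ≤ ((inner ℂ ψ (H ψ) : ℂ)).re)
    (P : E →L[ℂ] E) (hPsa : ∀ ψ χ : E, (inner ℂ (P ψ) χ : ℂ) = inner ℂ ψ (P χ))
    (hPidem : ∀ ψ : E, P (P ψ) = P ψ) (hPΩ : P Ω ≠ 0)
    (hεΩ : 1 - ‖P Ω‖ ^ 2 ≤ 1 / 2)
    (Ω' : E) (hΩ'norm : ‖Ω'‖ = 1) (hΩ'P : P Ω' = Ω')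
    (hΩ'gs : ∀ ψ : E, ‖ψ‖ = 1 → P ψ = ψ →
      ((inner ℂ Ω' (H Ω') : ℂ)).re ≤ ((inner ℂ ψ (H ψ) : ℂ)).re) :
    ∀ ψ : E, ‖ψ‖ = 1 → P ψ = ψ → (inner ℂ Ω' ψ : ℂ) = 0 →
      (1 - (1 - ‖P Ω‖ ^ 2)) * Δ -
          2 * (((inner ℂ (P Ω) (H (P Ω)) : ℂ)).re / ‖P Ω‖ ^ 2) ≤
        ((inner ℂ ψ (H ψ) : ℂ)).re - ((inner ℂ Ω' (H Ω') : ℂ)).re :=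
  stmt_15_general H hHsa Ω hΩnorm hHΩ Δ hΔ hgap P hPsa hPidem hPΩ Ω' hΩ'norm hΩ'P hΩ'gs
end
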